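/- arXiv:math/9402210 — 3 statements merged into one kernel-verified Lean document; each statement's English description precedes it below -/
import Mathlib

section
/- A subset K of L¹(μ, E) is relatively norm compact if and only if: (a) for each measurable B with positive measure, {m_B(f) : f ∈ K} is relatively norm compact in E, and (b) for each η > 0 there is a finite measurable partition π of Ω such that ∫_Ω ‖f − E_π(f)‖ dμ < η for every f ∈ K, where E_π(f) is the conditional expectation of f with respect to the finite algebra generated by π. -/
/-!
Relative compactness in `L¹` amounts to total boundedness, i.e. to finite `ε`-nets. If `K` has
finite nets, so does every set of averages `m_B(K)`, because `f ↦ m_B(f)` is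
`μ(B)⁻¹`-Lipschitz from `L¹` to `E`. Approximating the finitely many points of a net by simple
functions, the common refinement of their level sets is a partition `π` on whose atoms all of
them are constant, and `‖f - E_π f‖₁ ≤ 2 ‖f - s‖₁` for every `s` constant on the atoms, since on
each atom the average is a best constant approximation up to a factor `2`.

Conversely, `E_π f` is determined by the vector `(m_A f)_{A ∈ π}`, which ranges in the compact
product of the sets `closure m_A(K)`; a finite net of that product, together with the uniform
bound `‖f - E_π f‖₁ < η`, yields a finite net of `K`.
-/

open MeasureTheory Filter Topology

/-- The average value of `f` over `A`. -/
noncomputable def avg {Ω E : Type*} [MeasurableSpace Ω] [NormedAddCommGroup E]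
    [NormedSpace ℝ E] (μ : Measure Ω) (f : Ω → E) (A : Set Ω) : E :=
  (μ A).toReal⁻¹ • ∫ ω in A, f ω ∂μ

/-- The Bocce oscillation of `f` over `A`. -/
noncomputable def bocce {Ω E : Type*} [MeasurableSpace Ω] [NormedAddCommGroup E]
    [NormedSpace ℝ E] (μ : Measure Ω) (f : Ω → E) (A : Set Ω) : ℝ :=
  (∫ ω in A, ‖f ω - avg μ f A‖ ∂μ) / (μ A).toReal

/-- `K` is relatively norm compact in (the prequotient space) `L¹(μ, E)`:
every sequence from `K` has a subsequence converging in the `L¹`-seminorm. -/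
def RelNormCompact {Ω E : Type*} [MeasurableSpace Ω] [NormedAddCommGroup E]
    [NormedSpace ℝ E] (μ : Measure Ω) (K : Set (Ω → E)) : Prop :=
  ∀ f : ℕ → Ω → E, (∀ n, f n ∈ K) →
    ∃ k : ℕ → ℕ, StrictMono k ∧ ∃ f₀ : Ω → E, Integrable f₀ μ ∧
      Filter.Tendsto (fun j => ∫ ω, ‖f (k j) ω - f₀ ω‖ ∂μ) Filter.atTop (nhds 0)

/-- The conditional expectation relative to the finite algebra generated
by a finite measurable partition `π` of `Ω`. -/
noncomputable def condExpPartition {Ω E : Type*} [MeasurableSpace Ω] [NormedAddCommGroup E]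
    [NormedSpace ℝ E] (μ : Measure Ω) (π : Finset (Set Ω)) (f : Ω → E) : Ω → E :=
  fun ω => ∑ A ∈ π, Set.indicator A (fun _ => avg μ f A) ω

open Set

section

variable {Ω E : Type*} [MeasurableSpace Ω] [NormedAddCommGroup E] {μ : Measure Ω}

lemma dist_toL1_toL1 {f g : Ω → E} (hf : Integrable f μ) (hg : Integrable g μ) :
    dist (hf.toL1 f) (hg.toL1 g) = ∫ ω, ‖f ω - g ω‖ ∂μ := by
  rw [L1.dist_eq_integral_dist]
  refine integral_congr_ae ?_
  filter_upwards [hf.coeFn_toL1, hg.coeFn_toL1] with ω hfω hgω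
  rw [hfω, hgω, dist_eq_norm]

lemma integral_norm_sub_le_add {f g h : Ω → E} (hf : Integrable f μ) (hg : Integrable g μ)
    (hh : Integrable h μ) :
    ∫ ω, ‖f ω - h ω‖ ∂μ ≤ ∫ ω, ‖f ω - g ω‖ ∂μ + ∫ ω, ‖g ω - h ω‖ ∂μ := by
  simpa only [dist_toL1_toL1 hf hg, dist_toL1_toL1 hg hh, dist_toL1_toL1 hf hh] using
    dist_triangle (hf.toL1 f) (hg.toL1 g) (hh.toL1 h)

lemma MeasureTheory.Integrable.exists_simpleFunc_integral_norm_sub_lt {f : Ω → E}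
    (hf : Integrable f μ) {ε : ℝ} (hε : 0 < ε) :
    ∃ s : SimpleFunc Ω E, Integrable s μ ∧ ∫ ω, ‖f ω - s ω‖ ∂μ < ε := by
  obtain ⟨s, hfs, hsLp⟩ := (memLp_one_iff_integrable.2 hf).exists_simpleFunc_eLpNorm_sub_lt
    ENNReal.one_ne_top (ENNReal.ofReal_pos.2 hε).ne'
  have hs : Integrable s μ := memLp_one_iff_integrable.1 hsLp
  refine ⟨s, hs, ?_⟩
  rw [eLpNorm_one_eq_lintegral_enorm] at hfs
  exact (integral_norm_eq_lintegral_enorm (hf.sub hs).aestronglyMeasurable).trans_lt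
    (ENNReal.toReal_lt_of_lt_ofReal hfs)

structure IsMeasurablePartition (π : Finset (Set Ω)) : Prop where
  measurableSet : ∀ A ∈ π, MeasurableSet A
  disjoint : ∀ A ∈ π, ∀ A' ∈ π, A ≠ A' → Disjoint A A'
  iUnion_eq_univ : ⋃ A ∈ π, A = univ

namespace IsMeasurablePartition

variable {π : Finset (Set Ω)}

lemma exists_mem (hπ : IsMeasurablePartition π) (ω : Ω) : ∃ A ∈ π, ω ∈ A :=
  let ⟨A, hA, hω⟩ := mem_iUnion₂.1 (hπ.iUnion_eq_univ ▸ mem_univ ω)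
  ⟨A, hA, hω⟩

lemma integral_eq_sum_setIntegral {G : Type*} [NormedAddCommGroup G] [NormedSpace ℝ G]
    (hπ : IsMeasurablePartition π) {g : Ω → G} (hg : Integrable g μ) :
    ∫ ω, g ω ∂μ = ∑ A ∈ π, ∫ ω in A, g ω ∂μ := by
  rw [← setIntegral_univ, ← hπ.iUnion_eq_univ]
  exact integral_biUnion_finset π hπ.measurableSet
    (fun A hA A' hA' hne => hπ.disjoint A hA A' hA' hne) fun A _ => hg.integrableOn

end IsMeasurablePartition

open Classical in
lemma MeasureTheory.SimpleFunc.exists_isMeasurablePartition {β : Type*} (s : SimpleFunc Ω β) :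
    ∃ π : Finset (Set Ω), IsMeasurablePartition π ∧ ∀ A ∈ π, ∃ b, ∀ ω ∈ A, s ω = b := by
  refine ⟨s.range.image fun b => s ⁻¹' {b}, ⟨?_, ?_, ?_⟩, ?_⟩
  · simp only [Finset.mem_image]
    rintro _ ⟨b, -, rfl⟩
    exact s.measurableSet_fiber b
  · simp only [Finset.mem_image]
    rintro _ ⟨b, -, rfl⟩ _ ⟨b', -, rfl⟩ hne
    exact Disjoint.preimage _ (disjoint_singleton.2 fun h => hne (h ▸ rfl))
  · refine eq_univ_of_forall fun ω => mem_iUnion₂.2 ⟨s ⁻¹' {s ω}, ?_, rfl⟩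
    exact Finset.mem_image_of_mem _ (s.mem_range_self ω)
  · simp only [Finset.mem_image]
    rintro _ ⟨b, -, rfl⟩
    exact ⟨b, fun ω hω => hω⟩

def MeasureTheory.SimpleFunc.pi {ι β : Type*} [Finite ι] (s : ι → SimpleFunc Ω β) :
    SimpleFunc Ω (ι → β) where
  toFun ω i := s i ω
  measurableSet_fiber' c := by
    convert MeasurableSet.iInter fun i => (s i).measurableSet_fiber (c i)
    ext ω
    simp [funext_iff]
  finite_range' := (Set.Finite.pi fun i => (s i).finite_range).subset <| by
    rintro _ ⟨ω, rfl⟩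
    simp

lemma exists_isMeasurablePartition_forall_simpleFunc_const {β : Type*}
    (S : Finset (SimpleFunc Ω β)) :
    ∃ π : Finset (Set Ω), IsMeasurablePartition π ∧
      ∀ s ∈ S, ∀ A ∈ π, ∃ b, ∀ ω ∈ A, s ω = b := by
  obtain ⟨π, hπ, hconst⟩ :=
    (SimpleFunc.pi fun s : S => (s : SimpleFunc Ω β)).exists_isMeasurablePartition
  refine ⟨π, hπ, fun s hs A hA => ?_⟩
  obtain ⟨c, hc⟩ := hconst A hA
  exact ⟨c ⟨s, hs⟩, fun ω hω => congr_fun (hc ω hω) ⟨s, hs⟩⟩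

noncomputable def piecewiseConst (π : Finset (Set Ω)) (c : π → E) : Ω → E :=
  fun ω => ∑ A : π, (A : Set Ω).indicator (fun _ => c A) ω

section piecewiseConst

variable {π : Finset (Set Ω)}

lemma piecewiseConst_apply_of_mem (hπ : IsMeasurablePartition π) (c : π → E) {A : Set Ω}
    (hA : A ∈ π) {ω : Ω} (hω : ω ∈ A) : piecewiseConst π c ω = c ⟨A, hA⟩ := by
  rw [piecewiseConst, Finset.sum_eq_single ⟨A, hA⟩, indicator_of_mem hω]
  · intro A' _ hne
    refine indicator_of_notMem (fun hω' => ?_) _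
    exact disjoint_left.1 (hπ.disjoint _ A'.2 A hA fun h => hne (Subtype.ext h)) hω' hω
  · simp

lemma norm_piecewiseConst_le (hπ : IsMeasurablePartition π) (c : π → E) (ω : Ω) :
    ‖piecewiseConst π c ω‖ ≤ ‖c‖ := by
  obtain ⟨A, hA, hω⟩ := hπ.exists_mem ω
  rw [piecewiseConst_apply_of_mem hπ c hA hω]
  exact norm_le_pi_norm c _

lemma integrable_piecewiseConst [IsFiniteMeasure μ] (hπ : IsMeasurablePartition π)
    (c : π → E) : Integrable (piecewiseConst π c) μ :=
  integrable_finsetSum _ fun A _ => (integrable_const _).indicator (hπ.measurableSet A A.2)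

lemma integral_norm_sub_piecewiseConst_le [IsFiniteMeasure μ] (hπ : IsMeasurablePartition π)
    (c c' : π → E) :
    ∫ ω, ‖piecewiseConst π c ω - piecewiseConst π c' ω‖ ∂μ ≤ ‖c - c'‖ * μ.real univ := by
  have hsub : ∀ ω, piecewiseConst π c ω - piecewiseConst π c' ω = piecewiseConst π (c - c') ω := by
    intro ω
    simp only [piecewiseConst, ← Finset.sum_sub_distrib]
    refine Finset.sum_congr rfl fun A _ => ?_
    by_cases hω : ω ∈ (A : Set Ω) <;> simp [hω]
  simp only [hsub]
  calc ∫ ω, ‖piecewiseConst π (c - c') ω‖ ∂μ ≤ ∫ _, ‖c - c'‖ ∂μ :=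
        integral_mono (integrable_piecewiseConst hπ _).norm (integrable_const _)
          (norm_piecewiseConst_le hπ _)
    _ = ‖c - c'‖ * μ.real univ := by rw [integral_const, smul_eq_mul, mul_comm]

end piecewiseConst

section NormedSpace

variable [NormedSpace ℝ E]

lemma RelNormCompact.exists_finite_net {K : Set (Ω → E)} (hR : RelNormCompact μ K)
    (hK : ∀ f ∈ K, Integrable f μ) {ε : ℝ} (hε : 0 < ε) :
    ∃ T ⊆ K, T.Finite ∧ ∀ f ∈ K, ∃ g ∈ T, ∫ ω, ‖f ω - g ω‖ ∂μ < ε := by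
  by_contra! hfar
  -- otherwise `K` contains an `ε`-separated sequence, which has no convergent subsequence
  obtain ⟨u, hu⟩ := seq_of_forall_finite_exists
    (P := fun f T => f ∈ K ∧ ∀ g ∈ T ∩ K, ε ≤ ∫ ω, ‖f ω - g ω‖ ∂μ) fun T hT =>
      hfar (T ∩ K) inter_subset_right (hT.inter_of_left K)
  obtain ⟨k, hk, f₀, hf₀, hlim⟩ := hR u fun n => (hu n).1
  obtain ⟨j, hj⟩ := eventually_atTop.1 (hlim.eventually (gt_mem_nhds (half_pos hε)))
  have hsep : ε ≤ ∫ ω, ‖u (k (j + 1)) ω - u (k j) ω‖ ∂μ :=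
    (hu _).2 _ ⟨mem_image_of_mem u (hk j.lt_succ_self), (hu _).1⟩
  have htri := integral_norm_sub_le_add (hK _ (hu (k (j + 1))).1) hf₀ (hK _ (hu (k j)).1)
  simp_rw [norm_sub_rev (f₀ _)] at htri
  linarith [hj j le_rfl, hj (j + 1) j.le_succ]

lemma relNormCompact_of_forall_finite_net [CompleteSpace E] {K : Set (Ω → E)}
    (hK : ∀ f ∈ K, Integrable f μ)
    (hnet : ∀ ε > 0, ∃ T : Set (Ω → E), T.Finite ∧ (∀ g ∈ T, Integrable g μ) ∧
      ∀ f ∈ K, ∃ g ∈ T, ∫ ω, ‖f ω - g ω‖ ∂μ < ε) :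
    RelNormCompact μ K := by
  intro f hf
  set F : ℕ → Ω →₁[μ] E := fun n => (hK _ (hf n)).toL1 (f n)
  have hF : TotallyBounded (range F) := by
    refine Metric.totallyBounded_iff.2 fun ε hε => ?_
    obtain ⟨T, hT, hTint, hTnet⟩ := hnet ε hε
    have := hT.to_subtype
    refine ⟨range fun g : T => (hTint g g.2).toL1 g, finite_range _, ?_⟩
    rintro _ ⟨n, rfl⟩
    obtain ⟨g, hgT, hfg⟩ := hTnet (f n) (hf n)
    exact mem_iUnion₂.2 ⟨_, ⟨⟨g, hgT⟩, rfl⟩, by rwa [Metric.mem_ball, dist_toL1_toL1]⟩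
  obtain ⟨F₀, -, k, hk, hlim⟩ := (hF.closure.isCompact_of_isClosed isClosed_closure).tendsto_subseq
    fun n => subset_closure (mem_range_self n)
  refine ⟨k, hk, F₀, L1.integrable_coeFn F₀, ?_⟩
  rw [tendsto_iff_dist_tendsto_zero] at hlim
  refine hlim.congr fun j => ?_
  rw [← dist_toL1_toL1 (hK _ (hf _)) (L1.integrable_coeFn F₀), Integrable.toL1_coeFn]
  rfl

lemma avg_of_measure_eq_zero {f : Ω → E} {A : Set Ω} (h : μ A = 0) : avg μ f A = 0 := by
  simp [avg, h]

lemma toReal_measure_smul_avg [IsFiniteMeasure μ] (f : Ω → E) (A : Set Ω) :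
    (μ A).toReal • avg μ f A = ∫ ω in A, f ω ∂μ := by
  rcases eq_or_ne (μ A) 0 with h | h
  · simp [avg, Measure.restrict_eq_zero.2 h]
  · rw [avg, smul_inv_smul₀ (ENNReal.toReal_ne_zero.2 ⟨h, measure_ne_top μ A⟩)]

lemma norm_avg_sub_avg_le {f g : Ω → E} (hf : Integrable f μ) (hg : Integrable g μ)
    (A : Set Ω) :
    ‖avg μ f A - avg μ g A‖ ≤ (μ A).toReal⁻¹ * ∫ ω, ‖f ω - g ω‖ ∂μ := by
  rw [avg, avg, ← smul_sub, ← integral_sub hf.integrableOn hg.integrableOn, norm_smul,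
    Real.norm_of_nonneg (by positivity)]
  gcongr
  exact (norm_integral_le_integral_norm _).trans
    (setIntegral_le_integral (hf.sub hg).norm (.of_forall fun _ => norm_nonneg _))

lemma setIntegral_norm_sub_avg_le [CompleteSpace E] [IsFiniteMeasure μ] {f : Ω → E}
    (hf : Integrable f μ) (A : Set Ω) (v : E) :
    ∫ ω in A, ‖f ω - avg μ f A‖ ∂μ ≤ 2 * ∫ ω in A, ‖f ω - v‖ ∂μ := by
  have hfv : IntegrableOn (fun ω => ‖f ω - v‖) A μ :=
    (hf.sub (integrable_const v)).norm.integrableOn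
  have hconst : (μ A).toReal * ‖v - avg μ f A‖ ≤ ∫ ω in A, ‖f ω - v‖ ∂μ := by
    calc (μ A).toReal * ‖v - avg μ f A‖ = ‖∫ ω in A, (v - f ω) ∂μ‖ := by
          rw [integral_sub (integrable_const v) hf.integrableOn, setIntegral_const,
            ← toReal_measure_smul_avg, measureReal_def, ← smul_sub, norm_smul,
            Real.norm_of_nonneg ENNReal.toReal_nonneg]
      _ ≤ ∫ ω in A, ‖f ω - v‖ ∂μ := by
          refine (norm_integral_le_integral_norm _).trans_eq ?_
          simp_rw [norm_sub_rev v]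
  calc ∫ ω in A, ‖f ω - avg μ f A‖ ∂μ ≤ ∫ ω in A, (‖f ω - v‖ + ‖v - avg μ f A‖) ∂μ :=
        integral_mono (hf.sub (integrable_const _)).norm.integrableOn
          (hfv.add (integrable_const _)) fun ω => norm_sub_le_norm_sub_add_norm_sub _ _ _
    _ = ∫ ω in A, ‖f ω - v‖ ∂μ + (μ A).toReal * ‖v - avg μ f A‖ := by
          rw [integral_add hfv (integrable_const _), setIntegral_const, smul_eq_mul]
          rfl
    _ ≤ 2 * ∫ ω in A, ‖f ω - v‖ ∂μ := by linarith

section condExpPartition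

variable {π : Finset (Set Ω)}

lemma condExpPartition_eq_piecewiseConst (f : Ω → E) :
    condExpPartition μ π f = piecewiseConst π fun A => avg μ f A := by
  ext ω
  exact (Finset.sum_coe_sort π _).symm

lemma integral_norm_sub_condExpPartition_le [CompleteSpace E] [IsFiniteMeasure μ]
    (hπ : IsMeasurablePartition π) {f h : Ω → E} (hf : Integrable f μ) (hh : Integrable h μ)
    (hconst : ∀ A ∈ π, ∃ v, ∀ ω ∈ A, h ω = v) :
    ∫ ω, ‖f ω - condExpPartition μ π f ω‖ ∂μ ≤ 2 * ∫ ω, ‖f ω - h ω‖ ∂μ := by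
  have hEf : Integrable (condExpPartition μ π f) μ := by
    rw [condExpPartition_eq_piecewiseConst]
    exact integrable_piecewiseConst hπ _
  rw [hπ.integral_eq_sum_setIntegral (g := fun ω => ‖f ω - condExpPartition μ π f ω‖)
      (hf.sub hEf).norm,
    hπ.integral_eq_sum_setIntegral (g := fun ω => ‖f ω - h ω‖) (hf.sub hh).norm, Finset.mul_sum]
  refine Finset.sum_le_sum fun A hA => ?_
  obtain ⟨v, hv⟩ := hconst A hA
  have hEfA : ∀ ω ∈ A, condExpPartition μ π f ω = avg μ f A := fun ω hω => by
    rw [condExpPartition_eq_piecewiseConst, piecewiseConst_apply_of_mem hπ _ hA hω]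
  calc ∫ ω in A, ‖f ω - condExpPartition μ π f ω‖ ∂μ = ∫ ω in A, ‖f ω - avg μ f A‖ ∂μ :=
        setIntegral_congr_fun (hπ.measurableSet A hA) fun ω hω => by rw [hEfA ω hω]
    _ ≤ 2 * ∫ ω in A, ‖f ω - v‖ ∂μ := setIntegral_norm_sub_avg_le hf A v
    _ = 2 * ∫ ω in A, ‖f ω - h ω‖ ∂μ := by
        congr 1
        exact setIntegral_congr_fun (hπ.measurableSet A hA) fun ω hω => by rw [hv ω hω]

end condExpPartition

section Compactness

variable [CompleteSpace E] [IsFiniteMeasure μ] {K : Set (Ω → E)}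

lemma RelNormCompact.isCompact_closure_avg (hR : RelNormCompact μ K)
    (hK : ∀ f ∈ K, Integrable f μ) {B : Set Ω} (hB : 0 < μ B) :
    IsCompact (closure {x : E | ∃ f ∈ K, x = avg μ f B}) := by
  have hB' : 0 < (μ B).toReal := ENNReal.toReal_pos hB.ne' (measure_ne_top μ B)
  refine (TotallyBounded.closure ?_).isCompact_of_isClosed isClosed_closure
  refine Metric.totallyBounded_iff.2 fun ε hε => ?_
  obtain ⟨T, hTK, hT, hTnet⟩ := hR.exists_finite_net hK (mul_pos hε hB')
  refine ⟨(avg μ · B) '' T, hT.image _, ?_⟩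
  rintro _ ⟨f, hf, rfl⟩
  obtain ⟨g, hgT, hfg⟩ := hTnet f hf
  refine mem_iUnion₂.2 ⟨avg μ g B, mem_image_of_mem _ hgT, ?_⟩
  rw [Metric.mem_ball, dist_eq_norm]
  calc ‖avg μ f B - avg μ g B‖ ≤ (μ B).toReal⁻¹ * ∫ ω, ‖f ω - g ω‖ ∂μ :=
        norm_avg_sub_avg_le (hK f hf) (hK g (hTK hgT)) B
    _ < (μ B).toReal⁻¹ * (ε * (μ B).toReal) := by gcongr
    _ = ε := by field_simp

lemma RelNormCompact.exists_isMeasurablePartition (hR : RelNormCompact μ K)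
    (hK : ∀ f ∈ K, Integrable f μ) {η : ℝ} (hη : 0 < η) :
    ∃ π : Finset (Set Ω), IsMeasurablePartition π ∧
      ∀ f ∈ K, ∫ ω, ‖f ω - condExpPartition μ π f ω‖ ∂μ < η := by
  obtain ⟨T, hTK, hT, hTnet⟩ := hR.exists_finite_net hK (by positivity : 0 < η / 4)
  choose! s hs hgs using fun g (hg : g ∈ T) =>
    (hK g (hTK hg)).exists_simpleFunc_integral_norm_sub_lt (by positivity : 0 < η / 4)
  classical
  obtain ⟨π, hπ, hconst⟩ :=
    exists_isMeasurablePartition_forall_simpleFunc_const (hT.toFinset.image s)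
  refine ⟨π, hπ, fun f hf => ?_⟩
  obtain ⟨g, hgT, hfg⟩ := hTnet f hf
  calc ∫ ω, ‖f ω - condExpPartition μ π f ω‖ ∂μ ≤ 2 * ∫ ω, ‖f ω - s g ω‖ ∂μ :=
        integral_norm_sub_condExpPartition_le hπ (hK f hf) (hs g hgT)
          (hconst _ (Finset.mem_image_of_mem s (hT.mem_toFinset.2 hgT)))
    _ ≤ 2 * (∫ ω, ‖f ω - g ω‖ ∂μ + ∫ ω, ‖g ω - s g ω‖ ∂μ) := by
        gcongr
        exact integral_norm_sub_le_add (hK f hf) (hK g (hTK hgT)) (hs g hgT)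
    _ < 2 * (η / 4 + η / 4) := by gcongr; exact hgs g hgT
    _ = η := by ring

lemma relNormCompact_of_isCompact_closure_avg_of_exists_isMeasurablePartition
    (hK : ∀ f ∈ K, Integrable f μ)
    (havg : ∀ B : Set Ω, MeasurableSet B → 0 < μ B →
      IsCompact (closure {x : E | ∃ f ∈ K, x = avg μ f B}))
    (hpart : ∀ η > 0, ∃ π : Finset (Set Ω), IsMeasurablePartition π ∧
      ∀ f ∈ K, ∫ ω, ‖f ω - condExpPartition μ π f ω‖ ∂μ < η) :
    RelNormCompact μ K := by
  refine relNormCompact_of_forall_finite_net hK fun ε hε => ?_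
  obtain ⟨π, hπ, hfπ⟩ := hpart (ε / 2) (half_pos hε)
  have hcpt (A : π) : IsCompact (closure {x : E | ∃ f ∈ K, x = avg μ f A}) := by
    rcases (zero_le : 0 ≤ μ A).eq_or_lt with h0 | hpos
    -- on a null atom `avg` takes the junk value `0`
    · have hnull : {x : E | ∃ f ∈ K, x = avg μ f A}.Subsingleton :=
        subsingleton_singleton.anti fun _ ⟨_, _, hx⟩ => hx ▸ avg_of_measure_eq_zero h0.symm
      exact hnull.closure.isCompact
    · exact havg A (hπ.measurableSet A A.2) hpos
  have havgK : TotallyBounded ((fun f (A : π) => avg μ f A) '' K) :=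
    (isCompact_univ_pi hcpt).totallyBounded.subset <| by
      rintro _ ⟨f, hf, rfl⟩
      exact mem_univ_pi.2 fun A => subset_closure ⟨f, hf, rfl⟩
  obtain ⟨δ, hδ, hδε⟩ := exists_pos_mul_lt (half_pos hε) (μ.real univ)
  obtain ⟨N, hN, hcover⟩ := Metric.totallyBounded_iff.1 havgK δ hδ
  refine ⟨piecewiseConst π '' N, hN.image _, ?_, fun f hf => ?_⟩
  · rintro _ ⟨c, -, rfl⟩
    exact integrable_piecewiseConst hπ c
  obtain ⟨c, hcN, hfc⟩ := mem_iUnion₂.1 (hcover ⟨f, hf, rfl⟩)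
  have hEf := condExpPartition_eq_piecewiseConst (μ := μ) (π := π) f
  refine ⟨piecewiseConst π c, mem_image_of_mem _ hcN, ?_⟩
  calc ∫ ω, ‖f ω - piecewiseConst π c ω‖ ∂μ
      ≤ ∫ ω, ‖f ω - condExpPartition μ π f ω‖ ∂μ
        + ∫ ω, ‖condExpPartition μ π f ω - piecewiseConst π c ω‖ ∂μ :=
        integral_norm_sub_le_add (hK f hf) (hEf ▸ integrable_piecewiseConst hπ _)
          (integrable_piecewiseConst hπ c)
    _ < ε / 2 + ε / 2 := by
        refine add_lt_add (hfπ f hf) ?_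
        calc _ ≤ ‖(fun A : π => avg μ f A) - c‖ * μ.real univ := by
              rw [hEf]
              exact integral_norm_sub_piecewiseConst_le hπ _ _
          _ ≤ δ * μ.real univ := by
              gcongr
              exact (dist_eq_norm _ c ▸ Metric.mem_ball.1 hfc).le
          _ < ε / 2 := by rwa [mul_comm]
    _ = ε := add_halves ε

end Compactness

end NormedSpace

end

theorem relNormCompact_iff_partition {Ω E : Type*} [MeasurableSpace Ω] [NormedAddCommGroup E]
    [NormedSpace ℝ E] [CompleteSpace E] (μ : Measure Ω) [IsProbabilityMeasure μ]
    (K : Set (Ω → E)) (hK : ∀ f ∈ K, Integrable f μ) :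
    RelNormCompact μ K ↔
      ((∀ B : Set Ω, MeasurableSet B → 0 < μ B →
          IsCompact (closure {x : E | ∃ f ∈ K, x = avg μ f B})) ∧
        ∀ η : ℝ, 0 < η → ∃ π : Finset (Set Ω),
          (∀ A ∈ π, MeasurableSet A) ∧
          (∀ A ∈ π, ∀ A' ∈ π, A ≠ A' → Disjoint A A') ∧
          (⋃ A ∈ π, A) = Set.univ ∧
          ∀ f ∈ K, ∫ ω, ‖f ω - condExpPartition μ π f ω‖ ∂μ < η) := by
  constructor
  · intro hR
    refine ⟨fun B _ hB => hR.isCompact_closure_avg hK hB, fun η hη => ?_⟩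
    obtain ⟨π, ⟨hm, hd, hc⟩, hπ⟩ := hR.exists_isMeasurablePartition hK hη
    exact ⟨π, hm, hd, hc, hπ⟩
  · rintro ⟨havg, hpart⟩
    refine relNormCompact_of_isCompact_closure_avg_of_exists_isMeasurablePartition hK havg
      fun η hη => ?_
    obtain ⟨π, hm, hd, hc, hπ⟩ := hpart η hη
    exact ⟨π, ⟨hm, hd, hc⟩, hπ⟩
end

section
/- A sequence (f_k) in L¹(μ, E) converges in the Pettis norm to f₀ ∈ L¹(μ, E) if and only if: (1) (f_k) is Pettis uniformly integrable; (2) (f_k) satisfies the sequential Pettis Bocce criterion; and (3) ‖m_B(f_k) − m_B(f₀)‖ → 0 for each measurable B with μ(B) > 0. -/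
/-!
Pettis convergence controls the three conditions directly: `‖m_B(f_k) - m_B(f₀)‖` is at most
`μ(B)⁻¹ ‖f_k - f₀‖_P`; the Pettis Bocce oscillation of `f_k` on `A` is at most that of `f₀` plus
`2 μ(A)⁻¹ ‖f_k - f₀‖_P`, and `f₀`, being essentially separably valued, is nearly constant on a
positive-measure subset of any set; and one integrable function dominates `f₀` and the finitely
many `f_k` that are not yet Pettis-close to `f₀`.

Conversely, suppose `‖f_k - f₀‖_P ≥ δ` for all `k` in an infinite set `T`. Choose greedily
disjoint cells `A_n`, on which `f₀` is nearly constant and the Pettis Bocce oscillation of `f_k`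
is small for all `k` in a shrinking infinite set `T_n ⊆ T`, each of measure at least half the
largest available. The Bocce criterion, applied along a diagonal sequence, shows that the cells
exhaust `Ω`. On a cell `A`, `∫_A |x*(f_k - f₀)|` is at most `μ(A)` times the two oscillations
plus `‖∫_A f_k - ∫_A f₀‖`, which tends to `0` by the condition on averages; uniform
integrability handles the complement of finitely many cells. Hence `‖f_k - f₀‖_P < δ` for some
`k ∈ T`.
-/

open MeasureTheory Filter Topology

/-- The Pettis (semi)norm on `L¹(μ, E)`. -/
noncomputable def pettisNorm {Ω E : Type*} [MeasurableSpace Ω] [NormedAddCommGroup E]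
    [NormedSpace ℝ E] (μ : Measure Ω) (f : Ω → E) : ℝ :=
  ⨆ x' : {x' : StrongDual ℝ E // ‖x'‖ ≤ 1}, ∫ ω, |x'.1 (f ω)| ∂μ

/-- The Pettis Bocce oscillation of `f` over `A`. -/
noncomputable def pettisBocce {Ω E : Type*} [MeasurableSpace Ω] [NormedAddCommGroup E]
    [NormedSpace ℝ E] (μ : Measure Ω) (f : Ω → E) (A : Set Ω) : ℝ :=
  ⨆ x' : {x' : StrongDual ℝ E // ‖x'‖ ≤ 1}, bocce μ (fun ω => x'.1 (f ω)) A

/-- The sequential Pettis Bocce criterion. -/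
def SeqPettisBocceCriterion {Ω E : Type*} [MeasurableSpace Ω] [NormedAddCommGroup E]
    [NormedSpace ℝ E] (μ : Measure Ω) (f : ℕ → Ω → E) : Prop :=
  ∀ k : ℕ → ℕ, StrictMono k → ∀ ε : ℝ, 0 < ε → ∀ B : Set Ω, MeasurableSet B → 0 < μ B →
    ∃ A ⊆ B, MeasurableSet A ∧ 0 < μ A ∧
      Filter.liminf (fun j => pettisBocce μ (f (k j)) A) Filter.atTop < ε

lemma exists_measure_le_two_mul {Ω : Type*} [MeasurableSpace Ω] (μ : Measure Ω)
    [IsFiniteMeasure μ] (P : Set Ω → Prop) (h₀ : P ∅) :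
    ∃ A, P A ∧ ∀ B, P B → μ B ≤ 2 * μ A := by
  set s := ⨆ (B : Set Ω) (_ : P B), μ B
  suffices ∃ A, P A ∧ s ≤ 2 * μ A from
    this.imp fun A hA =>
      ⟨hA.1, fun B hB => (le_iSup₂ (f := fun B (_ : P B) => μ B) B hB).trans hA.2⟩
  rcases eq_or_ne s 0 with hs | hs
  · exact ⟨∅, h₀, by simp [hs]⟩
  have hs_top : s ≠ ⊤ :=
    ne_top_of_le_ne_top (measure_ne_top μ Set.univ) (iSup₂_le fun B _ => measure_mono B.subset_univ)
  obtain ⟨A, hA⟩ := lt_iSup_iff.1 (ENNReal.half_lt_self hs hs_top)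
  obtain ⟨hPA, hsA⟩ := lt_iSup_iff.1 hA
  rw [ENNReal.div_lt_iff (by norm_num) (by norm_num), mul_comm] at hsA
  exact ⟨A, hPA, hsA.le⟩

lemma tendsto_measureReal_compl_biUnion_range {Ω : Type*} [MeasurableSpace Ω] {μ : Measure Ω}
    [IsFiniteMeasure μ] {s : ℕ → Set Ω} (hs : ∀ n, MeasurableSet (s n))
    (h : μ (⋃ n, s n)ᶜ = 0) :
    Tendsto (fun n => μ.real (⋃ i ∈ Finset.range n, s i)ᶜ) atTop (𝓝 0) := by
  have hanti : Antitone fun n => (⋃ i ∈ Finset.range n, s i)ᶜ := fun m n hmn =>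
    Set.compl_subset_compl.2 (Set.biUnion_subset_biUnion_left
      (Finset.coe_subset.2 (Finset.range_subset_range.2 hmn)))
  have hlim := tendsto_measure_iInter_atTop
    (fun n => (Finset.measurableSet_biUnion _ fun i _ => hs i).compl.nullMeasurableSet) hanti
    ⟨0, measure_ne_top μ _⟩
  have hinter : ⋂ n, (⋃ i ∈ Finset.range n, s i)ᶜ = (⋃ n, s n)ᶜ := by
    ext ω
    simp only [Set.mem_iInter, Set.mem_compl_iff, Set.mem_iUnion, Finset.mem_range, not_exists]
    exact ⟨fun hω i hi => hω (i + 1) i (Nat.lt_succ_self i) hi, fun hω n i _ => hω i⟩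
  rw [hinter, h] at hlim
  exact (ENNReal.tendsto_toReal ENNReal.zero_ne_top).comp hlim

lemma exists_subset_ae_norm_sub_le {Ω E : Type*} [MeasurableSpace Ω] [NormedAddCommGroup E]
    {μ : Measure Ω} {f₀ : Ω → E} (hf₀ : AEStronglyMeasurable f₀ μ) {B : Set Ω}
    (hB : MeasurableSet B) (hμB : 0 < μ B) {ε : ℝ} (hε : 0 < ε) :
    ∃ A ⊆ B, MeasurableSet A ∧ 0 < μ A ∧ ∃ c : E, ∀ᵐ ω ∂μ.restrict A, ‖f₀ ω - c‖ ≤ ε := by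
  obtain ⟨g, hg, hf₀g⟩ := hf₀
  obtain ⟨T, hT, hTdense⟩ := hg.isSeparable_range
  have hcover : B ⊆ ⋃ t ∈ T, B ∩ {ω | ‖g ω - t‖ ≤ ε} := fun ω hω => by
    obtain ⟨t, htT, hdist⟩ := Metric.mem_closure_iff.1 (hTdense ⟨ω, rfl⟩) ε hε
    exact Set.mem_biUnion htT ⟨hω, by simpa [dist_eq_norm] using hdist.le⟩
  obtain ⟨t, -, ht⟩ : ∃ t ∈ T, 0 < μ (B ∩ {ω | ‖g ω - t‖ ≤ ε}) := by
    by_contra! hnull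
    exact hμB.ne' (measure_mono_null hcover
      ((measure_biUnion_null_iff hT).2 fun t htT => nonpos_iff_eq_zero.1 (hnull t htT)))
  have hmeas : MeasurableSet {ω | ‖g ω - t‖ ≤ ε} :=
    (hg.sub stronglyMeasurable_const).norm.measurable measurableSet_Iic
  refine ⟨_, Set.inter_subset_left, hB.inter hmeas, ht, t, ?_⟩
  filter_upwards [ae_restrict_of_ae hf₀g, ae_restrict_mem (hB.inter hmeas)] with ω hω hωA
  rw [hω]
  exact hωA.2

abbrev DualBall (E : Type*) [NormedAddCommGroup E] [NormedSpace ℝ E] :=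
  {x' : StrongDual ℝ E // ‖x'‖ ≤ 1}

namespace DualBall

variable {E : Type*} [NormedAddCommGroup E] [NormedSpace ℝ E]

instance : Nonempty (DualBall E) := ⟨⟨0, by simp⟩⟩

lemma abs_apply_le (x' : DualBall E) (v : E) : |x'.1 v| ≤ ‖v‖ := by
  simpa using x'.1.le_of_opNorm_le x'.2 v

end DualBall

section PettisNorm

variable {Ω E : Type*} [MeasurableSpace Ω] [NormedAddCommGroup E] [NormedSpace ℝ E]
  {μ : Measure Ω} {f g : Ω → E}

lemma bddAbove_range_integral_abs_dual (hf : Integrable f μ) :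
    BddAbove (Set.range fun x' : DualBall E => ∫ ω, |x'.1 (f ω)| ∂μ) := by
  refine ⟨∫ ω, ‖f ω‖ ∂μ, ?_⟩
  rintro _ ⟨x', rfl⟩
  exact integral_mono (x'.1.integrable_comp hf).abs hf.norm fun ω => x'.abs_apply_le _

lemma integral_abs_dual_le_pettisNorm (hf : Integrable f μ) (x' : DualBall E) :
    ∫ ω, |x'.1 (f ω)| ∂μ ≤ pettisNorm μ f :=
  le_ciSup (bddAbove_range_integral_abs_dual hf) x'

lemma pettisNorm_le {C : ℝ} (h : ∀ x' : DualBall E, ∫ ω, |x'.1 (f ω)| ∂μ ≤ C) :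
    pettisNorm μ f ≤ C :=
  ciSup_le h

lemma pettisNorm_nonneg : 0 ≤ pettisNorm μ f :=
  Real.iSup_nonneg fun _ => integral_nonneg fun _ => abs_nonneg _

lemma setIntegral_abs_dual_le_pettisNorm (hf : Integrable f μ) (x' : DualBall E) (S : Set Ω) :
    ∫ ω in S, |x'.1 (f ω)| ∂μ ≤ pettisNorm μ f :=
  (setIntegral_le_integral (x'.1.integrable_comp hf).abs (ae_of_all _ fun _ => abs_nonneg _)).trans
    (integral_abs_dual_le_pettisNorm hf x')

lemma abs_setIntegral_dual_le [CompleteSpace E] {S : Set Ω} (hf : IntegrableOn f S μ)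
    (x' : DualBall E) : |∫ ω in S, x'.1 (f ω) ∂μ| ≤ ‖∫ ω in S, f ω ∂μ‖ := by
  rw [x'.1.integral_comp_comm hf]
  exact x'.abs_apply_le _

lemma norm_setIntegral_le_pettisNorm [CompleteSpace E] (hf : Integrable f μ) (S : Set Ω) :
    ‖∫ ω in S, f ω ∂μ‖ ≤ pettisNorm μ f := by
  obtain ⟨x', hx', hx'v⟩ := exists_dual_vector'' ℝ (∫ ω in S, f ω ∂μ)
  calc ‖∫ ω in S, f ω ∂μ‖ = |∫ ω in S, x' (f ω) ∂μ| := by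
        rw [x'.integral_comp_comm hf.integrableOn, hx'v]; simp
    _ ≤ ∫ ω in S, |x' (f ω)| ∂μ := abs_integral_le_integral_abs
    _ ≤ pettisNorm μ f := setIntegral_abs_dual_le_pettisNorm hf ⟨x', hx'⟩ S

lemma setIntegral_abs_dual_sub_le_add (hf : Integrable f μ) (hg : Integrable g μ)
    (x' : DualBall E) (S : Set Ω) :
    ∫ ω in S, |x'.1 (f ω - g ω)| ∂μ ≤ ∫ ω in S, |x'.1 (f ω)| ∂μ + ∫ ω in S, ‖g ω‖ ∂μ := by
  rw [← integral_add (x'.1.integrable_comp hf).abs.integrableOn hg.norm.integrableOn]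
  refine integral_mono (x'.1.integrable_comp (hf.sub hg)).abs.integrableOn
    ((x'.1.integrable_comp hf).abs.integrableOn.add hg.norm.integrableOn) fun ω => ?_
  rw [map_sub]
  exact (abs_sub _ _).trans (by gcongr; exact x'.abs_apply_le _)

lemma norm_avg_sub_le_pettisNorm [CompleteSpace E] (hf : Integrable f μ)
    (hg : Integrable g μ) (B : Set Ω) :
    ‖avg μ f B - avg μ g B‖ ≤ (μ.real B)⁻¹ * pettisNorm μ (fun ω => f ω - g ω) := by
  rw [avg, avg, ← smul_sub, ← integral_sub hf.integrableOn hg.integrableOn, norm_smul,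
    Real.norm_of_nonneg (by positivity), measureReal_def]
  exact mul_le_mul_of_nonneg_left (norm_setIntegral_le_pettisNorm (hf.sub hg) B) (by positivity)

end PettisNorm

section Bocce

variable {Ω E : Type*} [MeasurableSpace Ω] [NormedAddCommGroup E] [NormedSpace ℝ E]
  {μ : Measure Ω} {h h₁ h₂ : Ω → E} {A : Set Ω}

lemma bocce_empty (h : Ω → E) : bocce μ h ∅ = 0 := by
  simp [bocce]

lemma measureReal_smul_avg [IsFiniteMeasure μ] (hA : μ A ≠ 0) (h : Ω → E) :
    μ.real A • avg μ h A = ∫ ω in A, h ω ∂μ := by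
  rw [avg, ← measureReal_def, smul_inv_smul₀ ((measureReal_ne_zero_iff).2 hA)]

lemma measureReal_mul_bocce [IsFiniteMeasure μ] (h : Ω → E) (A : Set Ω) :
    μ.real A * bocce μ h A = ∫ ω in A, ‖h ω - avg μ h A‖ ∂μ := by
  rcases eq_or_ne (μ A) 0 with hA | hA
  · simp [Measure.restrict_eq_zero.2 hA, measureReal_def, hA]
  · rw [bocce, ← measureReal_def,
      mul_div_cancel₀ _ ((measureReal_ne_zero_iff).2 hA)]

lemma bocce_le_two_mul [CompleteSpace E] [IsFiniteMeasure μ] (hh : IntegrableOn h A μ) (c : E) :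
    bocce μ h A ≤ 2 * (μ.real A)⁻¹ * ∫ ω in A, ‖h ω - c‖ ∂μ := by
  rcases eq_or_ne (μ A) 0 with hA | hA
  · simp [bocce, hA]
  have hpos : 0 < μ.real A :=
    measureReal_nonneg.lt_of_ne' ((measureReal_ne_zero_iff).2 hA)
  have hdist : μ.real A * ‖c - avg μ h A‖ ≤ ∫ ω in A, ‖h ω - c‖ ∂μ := by
    calc μ.real A * ‖c - avg μ h A‖ = ‖∫ ω in A, (c - h ω) ∂μ‖ := by
          rw [integral_sub (integrable_const c) hh, setIntegral_const, ← measureReal_smul_avg hA,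
            ← smul_sub, norm_smul, Real.norm_of_nonneg hpos.le]
      _ ≤ ∫ ω in A, ‖c - h ω‖ ∂μ := norm_integral_le_integral_norm _
      _ = ∫ ω in A, ‖h ω - c‖ ∂μ := by simp_rw [norm_sub_rev]
  have hint : ∫ ω in A, ‖h ω - avg μ h A‖ ∂μ ≤ 2 * ∫ ω in A, ‖h ω - c‖ ∂μ :=
    calc ∫ ω in A, ‖h ω - avg μ h A‖ ∂μ ≤ ∫ ω in A, (‖h ω - c‖ + ‖c - avg μ h A‖) ∂μ :=
          integral_mono (hh.sub (integrable_const _)).norm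
            ((hh.sub (integrable_const _)).norm.add (integrable_const _))
            fun ω => norm_sub_le_norm_sub_add_norm_sub _ _ _
      _ = ∫ ω in A, ‖h ω - c‖ ∂μ + μ.real A * ‖c - avg μ h A‖ := by
          rw [integral_add (f := fun ω => ‖h ω - c‖) (hh.sub (integrable_const _)).norm
            (integrable_const _), setIntegral_const, smul_eq_mul]
      _ ≤ 2 * ∫ ω in A, ‖h ω - c‖ ∂μ := by linarith
  rw [← mul_le_mul_iff_of_pos_left hpos, measureReal_mul_bocce]
  calc _ ≤ 2 * ∫ ω in A, ‖h ω - c‖ ∂μ := hint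
    _ = μ.real A * (2 * (μ.real A)⁻¹ * ∫ ω in A, ‖h ω - c‖ ∂μ) := by field_simp

lemma bocce_add_le [IsFiniteMeasure μ] (hh₁ : IntegrableOn h₁ A μ) (hh₂ : IntegrableOn h₂ A μ) :
    bocce μ (fun ω => h₁ ω + h₂ ω) A ≤ bocce μ h₁ A + bocce μ h₂ A := by
  have havg : avg μ (fun ω => h₁ ω + h₂ ω) A = avg μ h₁ A + avg μ h₂ A := by
    rw [avg, integral_add hh₁ hh₂, smul_add, avg, avg]
  have hi₁ : IntegrableOn (fun ω => ‖h₁ ω - avg μ h₁ A‖) A μ := (hh₁.sub (integrable_const _)).norm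
  have hi₂ : IntegrableOn (fun ω => ‖h₂ ω - avg μ h₂ A‖) A μ := (hh₂.sub (integrable_const _)).norm
  rw [bocce, bocce, bocce, ← add_div, havg, ← integral_add hi₁ hi₂]
  refine div_le_div_of_nonneg_right (integral_mono ((hh₁.add hh₂).sub (integrable_const _)).norm
    (hi₁.add hi₂) fun ω => ?_) ENNReal.toReal_nonneg
  simpa only [add_sub_add_comm] using norm_add_le (h₁ ω - avg μ h₁ A) (h₂ ω - avg μ h₂ A)

lemma setIntegral_norm_sub_le [IsFiniteMeasure μ] (hh₁ : IntegrableOn h₁ A μ)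
    (hh₂ : IntegrableOn h₂ A μ) :
    ∫ ω in A, ‖h₁ ω - h₂ ω‖ ∂μ ≤ μ.real A * (bocce μ h₁ A + bocce μ h₂ A)
      + ‖∫ ω in A, h₁ ω ∂μ - ∫ ω in A, h₂ ω ∂μ‖ := by
  rcases eq_or_ne (μ A) 0 with hA | hA
  · simp [Measure.restrict_eq_zero.2 hA, measureReal_def, hA]
  set m₁ := avg μ h₁ A
  set m₂ := avg μ h₂ A
  have hmean : μ.real A * ‖m₁ - m₂‖ = ‖∫ ω in A, h₁ ω ∂μ - ∫ ω in A, h₂ ω ∂μ‖ := by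
    rw [← measureReal_smul_avg hA, ← measureReal_smul_avg hA, ← smul_sub, norm_smul,
      Real.norm_of_nonneg measureReal_nonneg]
  have hi₁ : IntegrableOn (fun ω => ‖h₁ ω - m₁‖) A μ := (hh₁.sub (integrable_const _)).norm
  have hi₂ : IntegrableOn (fun ω => ‖h₂ ω - m₂‖) A μ := (hh₂.sub (integrable_const _)).norm
  calc ∫ ω in A, ‖h₁ ω - h₂ ω‖ ∂μ ≤ ∫ ω in A, (‖h₁ ω - m₁‖ + ‖h₂ ω - m₂‖ + ‖m₁ - m₂‖) ∂μ := by
        refine integral_mono (hh₁.sub hh₂).norm ((hi₁.add hi₂).add (integrable_const _))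
          fun ω => ?_
        calc ‖h₁ ω - h₂ ω‖ = ‖(h₁ ω - m₁) - (h₂ ω - m₂) + (m₁ - m₂)‖ := by congr 1; abel
          _ ≤ _ := (norm_add_le _ _).trans (by gcongr; exact norm_sub_le _ _)
    _ = μ.real A * (bocce μ h₁ A + bocce μ h₂ A) + μ.real A * ‖m₁ - m₂‖ := by
        rw [integral_add (f := fun ω => ‖h₁ ω - m₁‖ + ‖h₂ ω - m₂‖) (hi₁.add hi₂)
            (integrable_const _), integral_add hi₁ hi₂,
          setIntegral_const, smul_eq_mul, mul_add, measureReal_mul_bocce, measureReal_mul_bocce]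
    _ = _ := by rw [hmean]

lemma tendsto_norm_setIntegral_sub [IsFiniteMeasure μ] {f : ℕ → Ω → E} {g : Ω → E}
    (hmean : ∀ B, MeasurableSet B → 0 < μ B →
      Tendsto (fun k => ‖avg μ (f k) B - avg μ g B‖) atTop (𝓝 0))
    {A : Set Ω} (hA : MeasurableSet A) :
    Tendsto (fun k => ‖∫ ω in A, f k ω ∂μ - ∫ ω in A, g ω ∂μ‖) atTop (𝓝 0) := by
  rcases eq_or_ne (μ A) 0 with h0 | h0
  · simp [Measure.restrict_eq_zero.2 h0]
  · have hlim := (hmean A hA (pos_iff_ne_zero.2 h0)).const_mul (μ.real A)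
    rw [mul_zero] at hlim
    refine hlim.congr fun k => ?_
    rw [← measureReal_smul_avg h0, ← measureReal_smul_avg h0, ← smul_sub, norm_smul,
      Real.norm_of_nonneg measureReal_nonneg]

end Bocce

section PettisBocce

variable {Ω E : Type*} [MeasurableSpace Ω] [NormedAddCommGroup E] [NormedSpace ℝ E]
  {μ : Measure Ω} {f g : Ω → E} {A : Set Ω}

lemma pettisBocce_nonneg : 0 ≤ pettisBocce μ f A :=
  Real.iSup_nonneg fun _ =>
    div_nonneg (integral_nonneg fun _ => norm_nonneg _) ENNReal.toReal_nonneg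

lemma pettisBocce_empty (f : Ω → E) : pettisBocce μ f ∅ = 0 := by
  simp [pettisBocce, bocce_empty]

lemma pettisBocce_le {C : ℝ} (h : ∀ x' : DualBall E, bocce μ (fun ω => x'.1 (f ω)) A ≤ C) :
    pettisBocce μ f A ≤ C :=
  ciSup_le h

lemma bocce_dual_le_two_mul [IsFiniteMeasure μ] (hf : IntegrableOn f A μ) (x' : DualBall E) :
    bocce μ (fun ω => x'.1 (f ω)) A ≤ 2 * (μ.real A)⁻¹ * ∫ ω in A, |x'.1 (f ω)| ∂μ := by
  simpa only [sub_zero, Real.norm_eq_abs] using bocce_le_two_mul (x'.1.integrable_comp hf) 0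

lemma bocce_dual_le_pettisBocce [IsFiniteMeasure μ] (hf : IntegrableOn f A μ)
    (x' : DualBall E) : bocce μ (fun ω => x'.1 (f ω)) A ≤ pettisBocce μ f A := by
  refine le_ciSup (f := fun y' : DualBall E => bocce μ (fun ω => y'.1 (f ω)) A)
    ⟨2 * (μ.real A)⁻¹ * ∫ ω in A, ‖f ω‖ ∂μ, ?_⟩ x'
  rintro _ ⟨y', rfl⟩
  refine (bocce_dual_le_two_mul hf y').trans (mul_le_mul_of_nonneg_left ?_ (by positivity))
  exact integral_mono (y'.1.integrable_comp hf).abs hf.norm fun ω => y'.abs_apply_le _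

lemma pettisBocce_le_two_mul [IsFiniteMeasure μ] (hf : IntegrableOn f A μ) {C : ℝ}
    (hC : ∀ x' : DualBall E, ∫ ω in A, |x'.1 (f ω)| ∂μ ≤ C) :
    pettisBocce μ f A ≤ 2 * (μ.real A)⁻¹ * C :=
  pettisBocce_le fun x' =>
    (bocce_dual_le_two_mul hf x').trans (mul_le_mul_of_nonneg_left (hC x') (by positivity))

lemma pettisBocce_le_of_ae_norm_sub_le [IsFiniteMeasure μ] (hf : IntegrableOn f A μ) {c : E}
    {ε : ℝ} (hε : 0 ≤ ε) (hc : ∀ᵐ ω ∂μ.restrict A, ‖f ω - c‖ ≤ ε) :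
    pettisBocce μ f A ≤ 2 * ε := by
  refine pettisBocce_le fun x' => (bocce_le_two_mul (x'.1.integrable_comp hf) (x'.1 c)).trans ?_
  have hint : ∫ ω in A, ‖x'.1 (f ω) - x'.1 c‖ ∂μ ≤ μ.real A * ε := by
    calc _ ≤ ∫ ω in A, ε ∂μ := by
          refine integral_mono_ae ((x'.1.integrable_comp hf).sub (integrable_const _)).norm
            (integrable_const ε) (hc.mono fun ω hω => ?_)
          simpa only [← map_sub, Real.norm_eq_abs] using (x'.abs_apply_le _).trans hω
      _ = μ.real A * ε := by rw [setIntegral_const, smul_eq_mul]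
  rcases eq_or_ne (μ.real A) 0 with h0 | h0
  · simp [h0, hε]
  · calc _ ≤ 2 * (μ.real A)⁻¹ * (μ.real A * ε) := by gcongr
      _ = 2 * ε := by field_simp

lemma pettisBocce_add_le [IsFiniteMeasure μ] (hf : IntegrableOn f A μ)
    (hg : IntegrableOn g A μ) :
    pettisBocce μ (fun ω => f ω + g ω) A ≤ pettisBocce μ f A + pettisBocce μ g A :=
  pettisBocce_le fun x' => by
    simp only [map_add]
    exact (bocce_add_le (x'.1.integrable_comp hf) (x'.1.integrable_comp hg)).trans
      (add_le_add (bocce_dual_le_pettisBocce hf x') (bocce_dual_le_pettisBocce hg x'))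

lemma setIntegral_abs_dual_sub_le [CompleteSpace E] [IsFiniteMeasure μ]
    (hf : IntegrableOn f A μ) (hg : IntegrableOn g A μ) (x' : DualBall E) :
    ∫ ω in A, |x'.1 (f ω - g ω)| ∂μ ≤ μ.real A * (pettisBocce μ f A + pettisBocce μ g A)
      + ‖∫ ω in A, f ω ∂μ - ∫ ω in A, g ω ∂μ‖ := by
  have hx'f := x'.1.integrable_comp hf
  have hx'g := x'.1.integrable_comp hg
  calc ∫ ω in A, |x'.1 (f ω - g ω)| ∂μ
        ≤ μ.real A * (bocce μ (fun ω => x'.1 (f ω)) A + bocce μ (fun ω => x'.1 (g ω)) A)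
          + |∫ ω in A, x'.1 (f ω) ∂μ - ∫ ω in A, x'.1 (g ω) ∂μ| := by
        simpa only [map_sub, Real.norm_eq_abs] using setIntegral_norm_sub_le hx'f hx'g
    _ ≤ _ := by
        rw [← integral_sub hx'f hx'g]
        simp_rw [← map_sub]
        gcongr
        · exact bocce_dual_le_pettisBocce hf x'
        · exact bocce_dual_le_pettisBocce hg x'
        · rw [← integral_sub hf hg]
          exact abs_setIntegral_dual_le (f := fun ω => f ω - g ω) (hf.sub hg) x'

lemma integral_abs_dual_sub_le_sum [CompleteSpace E] [IsFiniteMeasure μ] (hf : Integrable f μ)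
    (hg : Integrable g μ) {ι : Type*} (t : Finset ι) {s : ι → Set Ω}
    (hs : ∀ i ∈ t, MeasurableSet (s i)) (hdisj : Set.PairwiseDisjoint ↑t s) (x' : DualBall E) :
    ∫ ω, |x'.1 (f ω - g ω)| ∂μ ≤
      ∑ i ∈ t, (μ.real (s i) * (pettisBocce μ f (s i) + pettisBocce μ g (s i))
          + ‖∫ ω in s i, f ω ∂μ - ∫ ω in s i, g ω ∂μ‖)
        + ∫ ω in (⋃ i ∈ t, s i)ᶜ, |x'.1 (f ω - g ω)| ∂μ := by
  have hint : Integrable (fun ω => |x'.1 (f ω - g ω)|) μ :=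
    (x'.1.integrable_comp (hf.sub hg)).abs
  rw [← integral_add_compl (Finset.measurableSet_biUnion t hs) hint,
    integral_biUnion_finset t hs hdisj fun i _ => hint.integrableOn]
  gcongr with i
  exact setIntegral_abs_dual_sub_le hf.integrableOn hg.integrableOn x'

end PettisBocce

section UniformIntegrability

variable {Ω : Type*} [MeasurableSpace Ω] {μ : Measure Ω}

lemma exists_setIntegral_abs_le [IsFiniteMeasure μ] {g : Ω → ℝ} (hg : Integrable g μ) {ε : ℝ}
    (hε : 0 < ε) :
    ∃ C : ℝ, ∀ S : Set Ω, ∫ ω in S, |g ω| ∂μ ≤ C * μ.real S + ε := by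
  set F : ℕ → Ω → ℝ := fun n ω => max (|g ω| - n) 0
  have hF : ∀ n, Integrable (F n) μ := fun n => (hg.abs.sub (integrable_const _)).pos_part
  have hlim : Tendsto (fun n => ∫ ω, F n ω ∂μ) atTop (𝓝 (∫ _, (0 : ℝ) ∂μ)) := by
    refine tendsto_integral_of_dominated_convergence (fun ω => |g ω|)
      (fun n => (hF n).aestronglyMeasurable) hg.abs (fun n => ae_of_all _ fun ω => ?_)
      (ae_of_all _ fun ω => tendsto_const_nhds.congr' ?_)
    · rw [Real.norm_of_nonneg (le_max_right _ _)]
      exact max_le (sub_le_self _ n.cast_nonneg) (abs_nonneg _)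
    · filter_upwards [eventually_ge_atTop ⌈|g ω|⌉₊] with n hn
      exact (max_eq_right (sub_nonpos.2 ((Nat.le_ceil _).trans (Nat.cast_le.2 hn)))).symm
  rw [integral_zero] at hlim
  obtain ⟨n, hn⟩ := (hlim.eventually (eventually_le_nhds hε)).exists
  refine ⟨n, fun S => ?_⟩
  calc ∫ ω in S, |g ω| ∂μ ≤ ∫ ω in S, ((n : ℝ) + F n ω) ∂μ :=
        integral_mono hg.abs.integrableOn ((integrable_const _).add (hF n).integrableOn)
          fun ω => by linarith [le_max_left (|g ω| - n) 0]
    _ = n * μ.real S + ∫ ω in S, F n ω ∂μ := by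
        rw [integral_add (integrable_const _) (hF n).integrableOn, setIntegral_const,
          smul_eq_mul, mul_comm]
    _ ≤ n * μ.real S + ε := by
        gcongr
        exact (setIntegral_le_integral (hF n) (ae_of_all _ fun _ => le_max_right _ _)).trans hn

lemma setIntegral_abs_le_add_tail [IsFiniteMeasure μ] {h : Ω → ℝ} (hh : Integrable h μ) (c : ℝ)
    (S : Set Ω) :
    ∫ ω in S, |h ω| ∂μ ≤ max c 0 * μ.real S + ∫ ω in {ω | c ≤ |h ω|}, |h ω| ∂μ := by
  set T := {ω | c ≤ |h ω|}
  have hT : NullMeasurableSet T μ := nullMeasurableSet_le aemeasurable_const hh.1.aemeasurable.abs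
  have hind : Integrable (T.indicator fun ω => |h ω|) μ := (hh.abs.indicator₀ hT)
  calc ∫ ω in S, |h ω| ∂μ ≤ ∫ ω in S, (max c 0 + T.indicator (fun ω => |h ω|) ω) ∂μ := by
        refine integral_mono hh.abs.integrableOn ((integrable_const _).add hind.integrableOn)
          fun ω => ?_
        by_cases hω : ω ∈ T
        · simp [Set.indicator_of_mem hω]
        · simp only [Set.indicator_of_notMem hω, add_zero]
          exact (not_le.1 hω).le.trans (le_max_left _ _)
    _ = max c 0 * μ.real S + ∫ ω in S, T.indicator (fun ω => |h ω|) ω ∂μ := by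
        rw [integral_add (integrable_const _) hind.integrableOn, setIntegral_const,
          smul_eq_mul, mul_comm]
    _ ≤ max c 0 * μ.real S + ∫ ω in T, |h ω| ∂μ := by
        gcongr
        rw [← integral_indicator₀ hT]
        exact setIntegral_le_integral hind
          (ae_of_all _ fun ω => Set.indicator_nonneg (fun _ _ => abs_nonneg _) ω)

variable {ι : Type*} {h : ι → Ω → ℝ}

lemma exists_setIntegral_le_of_tail_le [IsFiniteMeasure μ]
    (hh : ∀ i, Integrable (h i) μ)
    (htail : ∀ ε > 0, ∃ c : ℝ, ∀ i, ∫ ω in {ω | c ≤ |h i ω|}, |h i ω| ∂μ ≤ ε)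
    {ε : ℝ} (hε : 0 < ε) :
    ∃ C : ℝ, ∀ i, ∀ S : Set Ω, ∫ ω in S, |h i ω| ∂μ ≤ C * μ.real S + ε := by
  obtain ⟨c, hc⟩ := htail ε hε
  exact ⟨max c 0, fun i S => (setIntegral_abs_le_add_tail (hh i) c S).trans (by gcongr; exact hc i)⟩

lemma exists_tail_le_of_setIntegral_le
    (hh : ∀ i, Integrable (h i) μ)
    (hS : ∀ ε > 0, ∃ C : ℝ, ∀ i, ∀ S : Set Ω, ∫ ω in S, |h i ω| ∂μ ≤ C * μ.real S + ε)
    {ε : ℝ} (hε : 0 < ε) :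
    ∃ c : ℝ, ∀ i, ∫ ω in {ω | c ≤ |h i ω|}, |h i ω| ∂μ ≤ ε := by
  obtain ⟨C, hC⟩ := hS (ε / 2) (half_pos hε)
  set C' := max C 0
  have hC' : ∀ i S, ∫ ω in S, |h i ω| ∂μ ≤ C' * μ.real S + ε / 2 := fun i S =>
    (hC i S).trans (by gcongr; exact le_max_left _ _)
  -- `M` bounds every `∫ |h i|`, and `c` is large enough for Chebyshev to give `hsmall`
  set M := C' * μ.real Set.univ + ε / 2
  set c := 2 * C' * M / ε + 1
  have hM : 0 ≤ M := by positivity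
  have hc : 0 < c := by positivity
  refine ⟨c, fun i => ?_⟩
  set T := {ω | c ≤ |h i ω|}
  have hcheb : c * μ.real T ≤ M := by
    refine (mul_meas_ge_le_integral_of_nonneg (ae_of_all _ fun _ => abs_nonneg _) (hh i).abs
      c).trans ?_
    simpa only [setIntegral_univ] using hC' i Set.univ
  have hsmall : C' * μ.real T ≤ ε / 2 := by
    have hcM : 2 * C' * M ≤ (c - 1) * ε := by
      rw [show c - 1 = 2 * C' * M / ε by ring, div_mul_cancel₀ _ hε.ne']
    have hC'0 : 0 ≤ C' := le_max_right _ _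
    nlinarith [measureReal_nonneg (μ := μ) (s := T)]
  linarith [hC' i T]

end UniformIntegrability

section Forward

variable {Ω E : Type*} [MeasurableSpace Ω] [NormedAddCommGroup E] [NormedSpace ℝ E]
  {μ : Measure Ω} [IsFiniteMeasure μ] {f : ℕ → Ω → E} {f₀ : Ω → E}

lemma seqPettisBocceCriterion_of_tendsto (hf : ∀ k, Integrable (f k) μ)
    (hf₀ : Integrable f₀ μ)
    (hconv : Tendsto (fun k => pettisNorm μ (fun ω => f k ω - f₀ ω)) atTop (𝓝 0)) :
    SeqPettisBocceCriterion μ f := by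
  intro k hk ε hε B hB hμB
  obtain ⟨A, hAB, hA, hμA, c, hc⟩ :=
    exists_subset_ae_norm_sub_le hf₀.1 hB hμB (by positivity : 0 < ε / 4)
  refine ⟨A, hAB, hA, hμA, ?_⟩
  have hbound : ∀ m, pettisBocce μ (f m) A
      ≤ ε / 2 + 2 * (μ.real A)⁻¹ * pettisNorm μ (fun ω => f m ω - f₀ ω) := fun m =>
    calc pettisBocce μ (f m) A = pettisBocce μ (fun ω => f₀ ω + (f m ω - f₀ ω)) A := by
          simp only [add_sub_cancel]
      _ ≤ pettisBocce μ f₀ A + pettisBocce μ (fun ω => f m ω - f₀ ω) A :=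
          pettisBocce_add_le hf₀.integrableOn ((hf m).sub hf₀).integrableOn
      _ ≤ _ := by
          gcongr
          · linarith [pettisBocce_le_of_ae_norm_sub_le hf₀.integrableOn (by positivity) hc]
          · exact pettisBocce_le_two_mul ((hf m).sub hf₀).integrableOn fun x' =>
              setIntegral_abs_dual_le_pettisNorm ((hf m).sub hf₀) x' A
  have hsmall : Tendsto (fun j => 2 * (μ.real A)⁻¹ * pettisNorm μ (fun ω => f (k j) ω - f₀ ω))
      atTop (𝓝 0) := by
    simpa using (hconv.comp hk.tendsto_atTop).const_mul (2 * (μ.real A)⁻¹)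
  have hev : ∀ᶠ j in atTop, pettisBocce μ (f (k j)) A ≤ 3 * ε / 4 :=
    (hsmall.eventually (eventually_le_nhds (by positivity : 0 < ε / 4))).mono fun j hj => by
      linarith [hbound (k j)]
  calc liminf (fun j => pettisBocce μ (f (k j)) A) atTop ≤ 3 * ε / 4 :=
        liminf_le_of_frequently_le hev.frequently
          (isBoundedUnder_of ⟨0, fun _ => pettisBocce_nonneg⟩)
    _ < ε := by linarith

lemma exists_setIntegral_abs_dual_le_of_tendsto (hf : ∀ k, Integrable (f k) μ)
    (hf₀ : Integrable f₀ μ)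
    (hconv : Tendsto (fun k => pettisNorm μ (fun ω => f k ω - f₀ ω)) atTop (𝓝 0))
    {ε : ℝ} (hε : 0 < ε) :
    ∃ C : ℝ, ∀ p : ℕ × DualBall E, ∀ S : Set Ω,
      ∫ ω in S, |p.2.1 (f p.1 ω)| ∂μ ≤ C * μ.real S + ε := by
  obtain ⟨K, hK⟩ := eventually_atTop.1 (hconv.eventually (eventually_le_nhds (half_pos hε)))
  set g : Ω → ℝ := fun ω => ‖f₀ ω‖ + ∑ i ∈ Finset.range K, ‖f i ω‖
  have hg : Integrable g μ := hf₀.norm.add (integrable_finsetSum _ fun i _ => (hf i).norm)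
  have hg_abs : ∀ ω, |g ω| = g ω := fun ω => abs_of_nonneg (by positivity)
  obtain ⟨C, hC⟩ := exists_setIntegral_abs_le hg (half_pos hε)
  refine ⟨C, fun ⟨k, x'⟩ S => ?_⟩
  have hx'f := x'.1.integrable_comp (hf k)
  have hdom : ∫ ω in S, |x'.1 (f k ω)| ∂μ ≤ ε / 2 + ∫ ω in S, |g ω| ∂μ := by
    rcases lt_or_ge k K with hk | hk
    · refine (integral_mono hx'f.abs.integrableOn hg.abs.integrableOn fun ω => ?_).trans
        (le_add_of_nonneg_left (half_pos hε).le)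
      refine (x'.abs_apply_le _).trans ?_
      rw [hg_abs]
      exact le_add_of_nonneg_of_le (norm_nonneg _)
        (Finset.single_le_sum (fun i _ => norm_nonneg (f i ω)) (Finset.mem_range.2 hk))
    · have hx'd := x'.1.integrable_comp ((hf k).sub hf₀)
      have hpt : ∀ ω, |x'.1 (f k ω)| ≤ |x'.1 (f k ω - f₀ ω)| + |g ω| := fun ω => by
        rw [hg_abs, map_sub]
        linarith [abs_sub_abs_le_abs_sub (x'.1 (f k ω)) (x'.1 (f₀ ω)), x'.abs_apply_le (f₀ ω),
          show ‖f₀ ω‖ ≤ g ω from le_add_of_nonneg_right (by positivity)]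
      calc ∫ ω in S, |x'.1 (f k ω)| ∂μ ≤ ∫ ω in S, (|x'.1 (f k ω - f₀ ω)| + |g ω|) ∂μ :=
            integral_mono hx'f.abs.integrableOn
              (hx'd.abs.integrableOn.add hg.abs.integrableOn) hpt
        _ = ∫ ω in S, |x'.1 (f k ω - f₀ ω)| ∂μ + ∫ ω in S, |g ω| ∂μ :=
            integral_add hx'd.abs.integrableOn hg.abs.integrableOn
        _ ≤ ε / 2 + ∫ ω in S, |g ω| ∂μ := by
            gcongr
            exact (setIntegral_abs_dual_le_pettisNorm ((hf k).sub hf₀) x' S).trans (hK k hk)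
  linarith [hC S]

end Forward

section Reverse

open Function

variable {Ω E : Type*} [MeasurableSpace Ω] [NormedAddCommGroup E] [NormedSpace ℝ E]
  {μ : Measure Ω} {f : ℕ → Ω → E} {f₀ : Ω → E} {ε : ℝ} {T : Set ℕ}

def IsBocceCell (μ : Measure Ω) (f : ℕ → Ω → E) (f₀ : Ω → E) (ε : ℝ) (T : Set ℕ)
    (A : Set Ω) : Prop :=
  MeasurableSet A ∧ (∃ c : E, ∀ᵐ ω ∂μ.restrict A, ‖f₀ ω - c‖ ≤ ε) ∧
    ∃ᶠ k in atTop, k ∈ T ∧ pettisBocce μ (f k) A < ε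

lemma isBocceCell_empty (hε : 0 < ε) (hT : ∃ᶠ k in atTop, k ∈ T) :
    IsBocceCell μ f f₀ ε T ∅ :=
  ⟨MeasurableSet.empty, ⟨0, by simp⟩, hT.mono fun k hk => ⟨hk, by rwa [pettisBocce_empty]⟩⟩

structure BocceExhaustion (μ : Measure Ω) (f : ℕ → Ω → E) (f₀ : Ω → E) (ε : ℝ) (T : Set ℕ) where
  index : ℕ → Set ℕ
  cell : ℕ → Set Ω
  index_zero : index 0 = T
  index_antitone : Antitone index
  isBocceCell : ∀ n, IsBocceCell μ f f₀ ε (index n) (cell n)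
  pettisBocce_lt : ∀ n, ∀ k ∈ index (n + 1), pettisBocce μ (f k) (cell n) < ε
  pairwise_disjoint : Pairwise (Disjoint on cell)
  measure_le : ∀ n B, B ⊆ (⋃ i ∈ Finset.range n, cell i)ᶜ →
    IsBocceCell μ f f₀ ε (index n) B → μ B ≤ 2 * μ (cell n)

namespace BocceExhaustion

lemma nonempty [IsFiniteMeasure μ] (hε : 0 < ε) (hT : ∃ᶠ k in atTop, k ∈ T) :
    Nonempty (BocceExhaustion μ f f₀ ε T) := by
  have step : ∀ (S : Set ℕ) (U : Set Ω), ∃ A : Set Ω, (∃ᶠ k in atTop, k ∈ S) →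
      A ⊆ Uᶜ ∧ IsBocceCell μ f f₀ ε S A ∧
        ∀ B ⊆ Uᶜ, IsBocceCell μ f f₀ ε S B → μ B ≤ 2 * μ A := by
    intro S U
    by_cases hS : ∃ᶠ k in atTop, k ∈ S
    · obtain ⟨A, hA, hmax⟩ := exists_measure_le_two_mul μ
        (fun B => B ⊆ Uᶜ ∧ IsBocceCell μ f f₀ ε S B) ⟨Set.empty_subset _, isBocceCell_empty hε hS⟩
      exact ⟨A, fun _ => ⟨hA.1, hA.2, fun B hBU hB => hmax B ⟨hBU, hB⟩⟩⟩
    · exact ⟨∅, fun h => absurd h hS⟩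
  choose cell hcell using step
  let next : Set ℕ × Set Ω → Set ℕ × Set Ω := fun p =>
    (p.1 ∩ {k | pettisBocce μ (f k) (cell p.1 p.2) < ε}, p.2 ∪ cell p.1 p.2)
  let state : ℕ → Set ℕ × Set Ω := fun n => next^[n] (T, ∅)
  have hstate : ∀ n, state (n + 1) = next (state n) := fun n =>
    Function.iterate_succ_apply' next n (T, ∅)
  have hunion : ∀ n, (state n).2 = ⋃ i ∈ Finset.range n, cell (state i).1 (state i).2 := by
    intro n
    induction n with
    | zero => simp [state]
    | succ n ih =>
      rw [hstate, Finset.range_add_one, Finset.set_biUnion_insert, ← ih, Set.union_comm]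
  have hfreq : ∀ n, ∃ᶠ k in atTop, k ∈ (state n).1 := by
    intro n
    induction n with
    | zero => exact hT
    | succ n ih => rw [hstate]; exact (hcell _ _ ih).2.1.2.2
  have hspec := fun n => hcell (state n).1 (state n).2 (hfreq n)
  refine ⟨{ index := fun n => (state n).1
            cell := fun n => cell (state n).1 (state n).2
            index_zero := rfl
            index_antitone := antitone_nat_of_succ_le fun n => by
              rw [hstate]; exact Set.inter_subset_left
            isBocceCell := fun n => (hspec n).2.1
            pettisBocce_lt := fun n k hk => by rw [hstate] at hk; exact hk.2
            pairwise_disjoint := (pairwise_disjoint_on _).2 fun m n hmn => ?_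
            measure_le := fun n B hB hBcell => (hspec n).2.2 B (hunion n ▸ hB) hBcell }⟩
  refine Set.disjoint_of_subset_left ?_ (Set.subset_compl_iff_disjoint_left.1 (hspec n).1)
  rw [hunion n]
  exact Set.subset_biUnion_of_mem (u := fun i => cell (state i).1 (state i).2)
    (Finset.mem_coe.2 (Finset.mem_range.2 hmn))

lemma measure_compl_iUnion_cell_eq_zero [IsFiniteMeasure μ] (G : BocceExhaustion μ f f₀ ε T)
    (hcrit : SeqPettisBocceCriterion μ f) (hf₀ : AEStronglyMeasurable f₀ μ)
    (hbdd : ∀ A, ∃ b, ∀ k, pettisBocce μ (f k) A ≤ b) (hε : 0 < ε) :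
    μ (⋃ n, G.cell n)ᶜ = 0 := by
  by_contra hV
  obtain ⟨B, hBV, hB, hμB, c, hc⟩ := exists_subset_ae_norm_sub_le hf₀
    (MeasurableSet.iUnion fun n => (G.isBocceCell n).1).compl (pos_iff_ne_zero.2 hV) hε
  -- a diagonal subsequence, eventually inside every `G.index n`
  obtain ⟨d, hd, hdG⟩ := extraction_forall_of_frequently fun n =>
    (G.isBocceCell n).2.2.mono fun k hk => hk.1
  obtain ⟨A, hAB, hA, hμA, hlim⟩ := hcrit d hd ε hε B hB hμB
  have hfreq : ∃ᶠ j in atTop, pettisBocce μ (f (d j)) A < ε := by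
    obtain ⟨b, hb⟩ := hbdd A
    exact frequently_lt_of_liminf_lt (isBoundedUnder_of ⟨b, fun j => hb (d j)⟩).isCoboundedUnder_ge
      hlim
  have hcell : ∀ n, IsBocceCell μ f f₀ ε (G.index n) A := fun n =>
    ⟨hA, ⟨c, ae_restrict_of_ae_restrict_of_subset hAB hc⟩, hd.tendsto_atTop.frequently <|
      (hfreq.and_eventually (eventually_ge_atTop n)).mono fun j hj =>
        ⟨G.index_antitone hj.2 (hdG j), hj.1⟩⟩
  have hle : ∀ n, μ A ≤ 2 * μ (G.cell n) := fun n =>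
    G.measure_le n A ((hAB.trans hBV).trans (Set.compl_subset_compl.2
      (Set.iUnion₂_subset fun i _ => Set.subset_iUnion G.cell i))) (hcell n)
  have hsum : ∑' n, μ (G.cell n) ≠ ⊤ := by
    rw [← measure_iUnion G.pairwise_disjoint fun n => (G.isBocceCell n).1]
    exact measure_ne_top μ _
  have hlim0 : Tendsto (fun n => 2 * μ (G.cell n)) atTop (𝓝 0) := by
    simpa using ENNReal.Tendsto.const_mul (ENNReal.tendsto_atTop_zero_of_tsum_ne_top hsum)
      (Or.inr (ENNReal.ofNat_ne_top (n := 2)))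
  exact hμA.ne' (nonpos_iff_eq_zero.1 (ge_of_tendsto' hlim0 hle))

lemma pettisNorm_sub_le [CompleteSpace E] [IsProbabilityMeasure μ]
    (G : BocceExhaustion μ f f₀ ε T) (hf : ∀ k, Integrable (f k) μ) (hf₀ : Integrable f₀ μ)
    (hε : 0 ≤ ε) {n k : ℕ} (hk : k ∈ G.index n) {r : ℝ}
    (hr : ∀ x' : DualBall E,
      ∫ ω in (⋃ i ∈ Finset.range n, G.cell i)ᶜ, |x'.1 (f k ω - f₀ ω)| ∂μ ≤ r) :
    pettisNorm μ (fun ω => f k ω - f₀ ω) ≤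
      3 * ε + ∑ i ∈ Finset.range n, ‖∫ ω in G.cell i, f k ω ∂μ - ∫ ω in G.cell i, f₀ ω ∂μ‖
        + r := by
  have hcell : ∀ i, MeasurableSet (G.cell i) := fun i => (G.isBocceCell i).1
  have hdisj : Set.PairwiseDisjoint ↑(Finset.range n) G.cell := G.pairwise_disjoint.set_pairwise _
  have hpieces : ∑ i ∈ Finset.range n, μ.real (G.cell i) *
      (pettisBocce μ (f k) (G.cell i) + pettisBocce μ f₀ (G.cell i)) ≤ 3 * ε :=
    calc _ ≤ ∑ i ∈ Finset.range n, μ.real (G.cell i) * (3 * ε) := by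
          gcongr with i hi
          have hfk := G.pettisBocce_lt i k (G.index_antitone (Finset.mem_range.1 hi) hk)
          obtain ⟨c, hc⟩ := (G.isBocceCell i).2.1
          linarith [pettisBocce_le_of_ae_norm_sub_le hf₀.integrableOn hε hc]
      _ = μ.real (⋃ i ∈ Finset.range n, G.cell i) * (3 * ε) := by
          rw [← Finset.sum_mul, measureReal_biUnion_finset hdisj fun i _ => hcell i]
      _ ≤ 3 * ε := mul_le_of_le_one_left (by positivity) measureReal_le_one
  refine pettisNorm_le fun x' => ?_
  refine (integral_abs_dual_sub_le_sum (hf k) hf₀ _ (fun i _ => hcell i) hdisj x').trans ?_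
  rw [Finset.sum_add_distrib]
  linarith [hr x']

end BocceExhaustion

lemma exists_mem_pettisNorm_sub_lt [CompleteSpace E] [IsProbabilityMeasure μ]
    (hf : ∀ k, Integrable (f k) μ) (hf₀ : Integrable f₀ μ)
    (hUI : ∀ ε > 0, ∃ C : ℝ, ∀ p : ℕ × DualBall E, ∀ S : Set Ω,
      ∫ ω in S, |p.2.1 (f p.1 ω)| ∂μ ≤ C * μ.real S + ε)
    (hcrit : SeqPettisBocceCriterion μ f)
    (hmean : ∀ B, MeasurableSet B → 0 < μ B →
      Tendsto (fun k => ‖avg μ (f k) B - avg μ f₀ B‖) atTop (𝓝 0))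
    (hT : ∃ᶠ k in atTop, k ∈ T) {δ : ℝ} (hδ : 0 < δ) :
    ∃ k ∈ T, pettisNorm μ (fun ω => f k ω - f₀ ω) < δ := by
  obtain ⟨ε, hε, hεδ⟩ : ∃ ε, 0 < ε ∧ 7 * ε < δ := ⟨δ / 8, by positivity, by linarith⟩
  obtain ⟨C, hC⟩ := hUI ε hε
  obtain ⟨C₀, hC₀⟩ := exists_setIntegral_abs_le hf₀.norm hε
  simp only [abs_norm] at hC₀
  have hbdd : ∀ A, ∃ b, ∀ k, pettisBocce μ (f k) A ≤ b := fun A =>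
    ⟨_, fun k => pettisBocce_le_two_mul (hf k).integrableOn fun x' => hC (k, x') A⟩
  obtain ⟨G⟩ := BocceExhaustion.nonempty (μ := μ) (f := f) (f₀ := f₀) hε hT
  have hcell : ∀ i, MeasurableSet (G.cell i) := fun i => (G.isBocceCell i).1
  obtain ⟨n, hn⟩ : ∃ n, (C + C₀) * μ.real (⋃ i ∈ Finset.range n, G.cell i)ᶜ ≤ ε := by
    have hlim := (tendsto_measureReal_compl_biUnion_range hcell
      (G.measure_compl_iUnion_cell_eq_zero hcrit hf₀.1 hbdd hε)).const_mul (C + C₀)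
    rw [mul_zero] at hlim
    exact (hlim.eventually (eventually_le_nhds hε)).exists
  have hmeans : Tendsto (fun k => ∑ i ∈ Finset.range n,
      ‖∫ ω in G.cell i, f k ω ∂μ - ∫ ω in G.cell i, f₀ ω ∂μ‖) atTop (𝓝 0) := by
    simpa using tendsto_finsetSum _ fun i _ => tendsto_norm_setIntegral_sub hmean (hcell i)
  obtain ⟨k, hkn, hk⟩ := (((G.isBocceCell n).2.2.mono fun k hk => hk.1).and_eventually
    (hmeans.eventually (eventually_lt_nhds hε))).exists
  refine ⟨k, G.index_zero ▸ G.index_antitone (Nat.zero_le n) hkn, ?_⟩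
  refine (G.pettisNorm_sub_le hf hf₀ hε.le hkn (r := 3 * ε) fun x' => ?_).trans_lt (by linarith)
  set V := (⋃ i ∈ Finset.range n, G.cell i)ᶜ
  calc ∫ ω in V, |x'.1 (f k ω - f₀ ω)| ∂μ ≤ ∫ ω in V, |x'.1 (f k ω)| ∂μ + ∫ ω in V, ‖f₀ ω‖ ∂μ :=
        setIntegral_abs_dual_sub_le_add (hf k) hf₀ x' V
    _ ≤ (C * μ.real V + ε) + (C₀ * μ.real V + ε) := add_le_add (hC (k, x') V) (hC₀ V)
    _ ≤ 3 * ε := by linarith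

end Reverse

theorem pettis_conv_iff {Ω E : Type*} [MeasurableSpace Ω] [NormedAddCommGroup E]
    [NormedSpace ℝ E] [CompleteSpace E] (μ : Measure Ω) [IsProbabilityMeasure μ]
    (f : ℕ → Ω → E) (f₀ : Ω → E) (hf : ∀ k, Integrable (f k) μ) (hf₀ : Integrable f₀ μ) :
    Filter.Tendsto (fun k => pettisNorm μ (fun ω => f k ω - f₀ ω)) Filter.atTop (nhds 0) ↔
      ((∀ ε : ℝ, 0 < ε → ∃ c : ℝ, ∀ k, ∀ x' : StrongDual ℝ E, ‖x'‖ ≤ 1 →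
          ∫ ω in {ω | c ≤ |x' (f k ω)|}, |x' (f k ω)| ∂μ ≤ ε) ∧
        SeqPettisBocceCriterion μ f ∧
        ∀ B : Set Ω, MeasurableSet B → 0 < μ B →
          Filter.Tendsto (fun k => ‖avg μ (f k) B - avg μ f₀ B‖) Filter.atTop (nhds 0)) := by
  have hdual : ∀ p : ℕ × DualBall E, Integrable (fun ω => p.2.1 (f p.1 ω)) μ := fun p =>
    p.2.1.integrable_comp (hf p.1)
  constructor
  · intro hconv
    refine ⟨fun ε hε => ?_, seqPettisBocceCriterion_of_tendsto hf hf₀ hconv, fun B _ _ => ?_⟩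
    · obtain ⟨c, hc⟩ := exists_tail_le_of_setIntegral_le hdual
        (fun ε hε => exists_setIntegral_abs_dual_le_of_tendsto hf hf₀ hconv hε) hε
      exact ⟨c, fun k x' hx' => hc (k, ⟨x', hx'⟩)⟩
    · refine squeeze_zero (fun _ => norm_nonneg _)
        (fun k => norm_avg_sub_le_pettisNorm (hf k) hf₀ B) ?_
      simpa using hconv.const_mul (μ.real B)⁻¹
  · rintro ⟨htail, hcrit, hmean⟩
    have hUI := fun ε (hε : 0 < ε) => exists_setIntegral_le_of_tail_le hdual
      (fun ε hε => (htail ε hε).imp fun c hc p => hc p.1 p.2.1 p.2.2) hε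
    refine tendsto_order.2 ⟨fun a ha => Eventually.of_forall fun k => ha.trans_le pettisNorm_nonneg,
      fun δ hδ => ?_⟩
    by_contra hnot
    obtain ⟨k, hk, hlt⟩ := exists_mem_pettisNorm_sub_lt hf hf₀ hUI hcrit hmean
      (T := {k | ¬ pettisNorm μ (fun ω => f k ω - f₀ ω) < δ}) (not_eventually.1 hnot) hδ
    exact hk hlt
end

section
/- Let E = ℓ¹ and f_k(ω) := (1/k) Σ_{i=1}^k r_i(ω) e_i, where r_i are the Rademacher functions on [0,1] and e_i the unit vectors of ℓ¹. Then ‖f_k‖_Pettis → 0, but for b(ω) := (1_{[r_i = 1]}(ω))_i ∈ L^∞(μ, ℓ^∞) one has ∫_0^1 ⟨f_k(ω), b(ω)⟩ dω = 1/2 for all k; hence (f_k) converges to 0 in Pettis norm but not weakly in L¹([0,1], ℓ¹). -/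
/-! On the dyadic intervals of level `n` the Rademacher function `r_i`, `i ≤ n`, is constant
with value `(-1) ^ (m / 2 ^ (n - i))`; pairing neighbouring intervals shows that the `r_i` are
orthonormal in `L²[0,1]` and that `r_i` has mean zero for `i ≥ 1`.

For `‖x'‖ ≤ 1` one has `x' (f_k) = k⁻¹ ∑ a_i r_i` with `|a_i| ≤ 1`, so by Cauchy–Schwarz and
orthonormality `∫ |x' (f_k)| ≤ k⁻¹ (∑ a_i²)^(1/2) ≤ k^(-1/2)`. On the other hand
`r_i 1_{r_i = 1} = (r_i² + r_i) / 2` integrates to `1 / 2`. -/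

open MeasureTheory Filter Topology

/-- The Rademacher functions. -/
noncomputable def rademacher (i : ℕ) (ω : ℝ) : ℝ :=
  Real.sign (Real.sin (2 ^ i * Real.pi * ω))

/-- The standard unit vectors of `ℓ¹`. -/
noncomputable def e1 (i : ℕ) : lp (fun _ : ℕ => ℝ) 1 := lp.single 1 i 1

/-- `f_k(ω) = (1/k) Σ_{i=1}^k r_i(ω) e_i`. -/
noncomputable def fex19 (k : ℕ) : ℝ → lp (fun _ : ℕ => ℝ) 1 := fun ω =>
  (k : ℝ)⁻¹ • ∑ i ∈ Finset.Icc (1 : ℕ) k, rademacher i ω • e1 i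

open Set Finset

namespace Real

lemma sign_sin_eq_neg_one_pow {x : ℝ} {m : ℕ} (h₁ : m * π < x) (h₂ : x < (m + 1) * π) :
    sign (sin x) = (-1) ^ m := by
  have hpos : 0 < sin (x - m * π) := sin_pos_of_pos_of_lt_pi (by linarith) (by linarith)
  rw [sin_sub_nat_mul_pi] at hpos
  rcases m.even_or_odd with hm | hm
  · rw [hm.neg_one_pow, one_mul] at hpos
    rw [hm.neg_one_pow, sign_of_pos hpos]
  · rw [hm.neg_one_pow, neg_one_mul, neg_pos] at hpos
    rw [hm.neg_one_pow, sign_of_neg hpos]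

@[fun_prop]
lemma measurable_sign : Measurable sign :=
  Measurable.ite measurableSet_Iio measurable_const
    (Measurable.ite measurableSet_Ioi measurable_const measurable_const)

end Real

@[fun_prop]
lemma measurable_rademacher (i : ℕ) : Measurable (rademacher i) := by
  unfold rademacher; fun_prop

lemma rademacher_apply_eq (i : ℕ) (ω : ℝ) :
    rademacher i ω = -1 ∨ rademacher i ω = 0 ∨ rademacher i ω = 1 :=
  Real.sign_apply_eq _

lemma abs_rademacher_le_one (i : ℕ) (ω : ℝ) : |rademacher i ω| ≤ 1 := by
  rcases rademacher_apply_eq i ω with h | h | h <;> simp [h]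

lemma rademacher_eq_neg_one_pow {n m : ℕ} {ω : ℝ}
    (hω : ω ∈ Ioo ((m : ℝ) / 2 ^ n) ((m + 1) / 2 ^ n)) : rademacher n ω = (-1) ^ m := by
  have h2n : (0 : ℝ) < 2 ^ n := by positivity
  have h₁ := (div_lt_iff₀ h2n).1 hω.1
  have h₂ := (lt_div_iff₀ h2n).1 hω.2
  apply Real.sign_sin_eq_neg_one_pow <;> nlinarith [Real.pi_pos]

lemma Ioo_div_mul_subset {a : ℝ} (ha : 0 < a) {b : ℕ} (hb : 0 < b) (m : ℕ) :
    Ioo ((m : ℝ) / (a * b)) ((m + 1) / (a * b)) ⊆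
      Ioo (((m / b : ℕ) : ℝ) / a) (((m / b : ℕ) + 1) / a) := by
  have hb' : (0 : ℝ) < b := by exact_mod_cast hb
  refine Ioo_subset_Ioo ?_ ?_
  · rw [div_le_div_iff₀ ha (by positivity)]
    have : ((m / b : ℕ) : ℝ) * b ≤ m := by exact_mod_cast Nat.div_mul_le_self m b
    nlinarith
  · rw [div_le_div_iff₀ (by positivity) ha]
    have : (m : ℝ) + 1 ≤ ((m / b : ℕ) + 1) * b := by
      exact_mod_cast (by rw [add_one_mul]; exact Nat.lt_div_mul_add hb)
    nlinarith

lemma rademacher_eq_neg_one_pow_div {i n m : ℕ} (hin : i ≤ n) {ω : ℝ}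
    (hω : ω ∈ Ioo ((m : ℝ) / 2 ^ n) ((m + 1) / 2 ^ n)) :
    rademacher i ω = (-1) ^ (m / 2 ^ (n - i)) := by
  have h2n : (2 : ℝ) ^ n = 2 ^ i * ((2 ^ (n - i) : ℕ) : ℝ) := by
    rw [Nat.cast_pow, Nat.cast_ofNat, ← pow_add, Nat.add_sub_cancel' hin]
  rw [h2n] at hω
  exact rademacher_eq_neg_one_pow (Ioo_div_mul_subset (by positivity) (by positivity) m hω)

instance isProbabilityMeasure_restrict_Icc_zero_one :
    IsProbabilityMeasure ((volume : Measure ℝ).restrict (Icc 0 1)) :=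
  ⟨by simp⟩

lemma setIntegral_Icc_zero_one_eq_sum {g : ℝ → ℝ} {N : ℕ} (hN : 0 < N)
    (hg : IntegrableOn g (Icc 0 1)) (c : ℕ → ℝ)
    (hc : ∀ m < N, ∀ ω ∈ Ioo ((m : ℝ) / N) ((m + 1) / N), g ω = c m) :
    ∫ ω in Icc 0 1, g ω = (∑ m ∈ range N, c m) / N := by
  have hN' : (0 : ℝ) < N := by exact_mod_cast hN
  have hpiece : ∀ m < N, ∫ ω in (m : ℝ) / N..((m + 1 : ℕ) : ℝ) / N, g ω = c m / N := by
    intro m hm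
    have hle : (m : ℝ) / N ≤ (m + 1) / N := by gcongr; linarith
    rw [Nat.cast_succ, intervalIntegral.integral_of_le hle, integral_Ioc_eq_integral_Ioo,
      setIntegral_congr_fun measurableSet_Ioo (hc m hm), setIntegral_const,
      Real.volume_real_Ioo_of_le hle, smul_eq_mul]
    field_simp
    ring
  have hint : ∀ m < N, IntervalIntegrable g volume ((m : ℝ) / N) (((m + 1 : ℕ) : ℝ) / N) := by
    intro m hm
    refine (hg.mono_set ?_).intervalIntegrable
    rw [Set.uIcc_of_le (by gcongr; omega)]
    refine Icc_subset_Icc (by positivity) ?_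
    rw [div_le_one hN']
    exact_mod_cast hm
  rw [integral_Icc_eq_integral_Ioc, ← intervalIntegral.integral_of_le zero_le_one,
    sum_div, ← Finset.sum_congr rfl fun m hm => hpiece m (mem_range.1 hm),
    intervalIntegral.sum_integral_adjacent_intervals hint]
  simp [hN'.ne']

lemma sum_range_two_mul_eq_zero {M : Type*} [AddCommGroup M] {f : ℕ → M}
    (hf : ∀ t, f (2 * t + 1) = -f (2 * t)) (N : ℕ) : ∑ m ∈ range (2 * N), f m = 0 := by
  induction N with
  | zero => simp
  | succ N ih => rw [Nat.mul_succ, sum_range_succ, sum_range_succ, ih, hf]; abel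

lemma integrableOn_of_abs_le_one {g : ℝ → ℝ} (hg : Measurable g) (hb : ∀ ω, |g ω| ≤ 1) :
    IntegrableOn g (Icc 0 1) :=
  Integrable.of_bound hg.aestronglyMeasurable 1 (ae_of_all _ hb)

lemma integrableOn_rademacher (i : ℕ) : IntegrableOn (rademacher i) (Icc 0 1) :=
  integrableOn_of_abs_le_one (measurable_rademacher i) (abs_rademacher_le_one i)

lemma integrableOn_rademacher_mul (i j : ℕ) :
    IntegrableOn (fun ω => rademacher i ω * rademacher j ω) (Icc 0 1) :=
  integrableOn_of_abs_le_one (by fun_prop) fun ω => by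
    rw [abs_mul]
    exact mul_le_one₀ (abs_rademacher_le_one i ω) (abs_nonneg _) (abs_rademacher_le_one j ω)

lemma integral_rademacher {i : ℕ} (hi : 0 < i) : ∫ ω in Icc 0 1, rademacher i ω = 0 := by
  rw [setIntegral_Icc_zero_one_eq_sum (N := 2 ^ i) (by positivity) (integrableOn_rademacher i)
      (fun m => (-1) ^ m) fun m _ ω hω => rademacher_eq_neg_one_pow (by exact_mod_cast hω),
    ← mul_pow_sub_one hi.ne' 2,
    sum_range_two_mul_eq_zero fun t => by rw [pow_succ, mul_neg_one], zero_div]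

lemma integral_rademacher_mul_self (i : ℕ) :
    ∫ ω in Icc 0 1, rademacher i ω * rademacher i ω = 1 := by
  rw [setIntegral_Icc_zero_one_eq_sum (N := 2 ^ i) (by positivity)
    (integrableOn_rademacher_mul i i) (fun _ => 1) fun m _ ω hω => by
      rw [rademacher_eq_neg_one_pow (by exact_mod_cast hω), ← pow_add, ← two_mul,
        pow_mul, neg_one_sq, one_pow]]
  simp

lemma integral_rademacher_mul_of_lt {i j : ℕ} (hij : i < j) :
    ∫ ω in Icc 0 1, rademacher i ω * rademacher j ω = 0 := by
  have hdiv : ∀ t, (2 * t + 1) / 2 ^ (j - i) = 2 * t / 2 ^ (j - i) := fun t => by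
    rw [← mul_pow_sub_one (by omega : j - i ≠ 0) 2, ← Nat.div_div_eq_div_mul,
      ← Nat.div_div_eq_div_mul]
    congr 1
    omega
  rw [setIntegral_Icc_zero_one_eq_sum (N := 2 ^ j) (by positivity)
      (integrableOn_rademacher_mul i j) (fun m => (-1) ^ (m / 2 ^ (j - i)) * (-1) ^ m)
      fun m _ ω hω => by
        rw [rademacher_eq_neg_one_pow_div hij.le (by exact_mod_cast hω),
          rademacher_eq_neg_one_pow (by exact_mod_cast hω)],
    ← mul_pow_sub_one (by omega : j ≠ 0) 2,
    sum_range_two_mul_eq_zero (fun t => by rw [hdiv, pow_succ (-1 : ℝ) (2 * t)]; ring), zero_div]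

lemma integral_rademacher_mul (i j : ℕ) :
    ∫ ω in Icc 0 1, rademacher i ω * rademacher j ω = if i = j then 1 else 0 := by
  rcases lt_trichotomy i j with h | rfl | h
  · rw [if_neg h.ne, integral_rademacher_mul_of_lt h]
  · rw [if_pos rfl, integral_rademacher_mul_self]
  · simp_rw [if_neg h.ne', mul_comm (rademacher i _), integral_rademacher_mul_of_lt h]

section SquareIntegrable

variable {Ω ι : Type*} [MeasurableSpace Ω] {μ : Measure Ω}

lemma integral_sum_mul_sq_of_orthonormal [DecidableEq ι] (s : Finset ι) {φ : ι → Ω → ℝ}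
    (hint : ∀ i ∈ s, ∀ j ∈ s, Integrable (fun ω => φ i ω * φ j ω) μ)
    (horth : ∀ i ∈ s, ∀ j ∈ s, ∫ ω, φ i ω * φ j ω ∂μ = if i = j then 1 else 0) (a : ι → ℝ) :
    ∫ ω, (∑ i ∈ s, a i * φ i ω) ^ 2 ∂μ = ∑ i ∈ s, a i ^ 2 := by
  have hexpand : ∀ ω, (∑ i ∈ s, a i * φ i ω) ^ 2
      = ∑ i ∈ s, ∑ j ∈ s, a i * a j * (φ i ω * φ j ω) := fun ω => by
    rw [sq, sum_mul_sum]; congr! 2; ring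
  simp_rw [hexpand]
  rw [integral_finsetSum _ fun i hi => integrable_finsetSum _ fun j hj =>
    (hint i hi j hj).const_mul _]
  refine Finset.sum_congr rfl fun i hi => ?_
  rw [integral_finsetSum _ fun j hj => (hint i hi j hj).const_mul _]
  simp_rw [integral_const_mul]
  rw [Finset.sum_congr rfl fun j hj => by rw [horth i hi j hj]]
  simp [hi, sq]

lemma sq_integral_abs_le_integral_sq [IsProbabilityMeasure μ] {f : Ω → ℝ} (hf : MemLp f 2 μ) :
    (∫ ω, |f ω| ∂μ) ^ 2 ≤ ∫ ω, f ω ^ 2 ∂μ := by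
  have h := ProbabilityTheory.variance_nonneg |f| μ
  rw [ProbabilityTheory.variance_eq_sub hf.abs, sub_nonneg] at h
  simpa only [Pi.pow_apply, Pi.abs_apply, sq_abs] using h

end SquareIntegrable

lemma norm_e1 (i : ℕ) : ‖e1 i‖ = 1 := by
  rw [e1, lp.norm_single (by norm_num), norm_one]

lemma apply_fex19 (x' : StrongDual ℝ (lp (fun _ : ℕ => ℝ) 1)) (k : ℕ) (ω : ℝ) :
    x' (fex19 k ω) = (k : ℝ)⁻¹ * ∑ i ∈ Finset.Icc 1 k, x' (e1 i) * rademacher i ω := by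
  simp only [fex19, map_smul, map_sum, smul_eq_mul, mul_comm]

lemma integral_abs_apply_fex19_le (k : ℕ) {x' : StrongDual ℝ (lp (fun _ : ℕ => ℝ) 1)}
    (hx' : ‖x'‖ ≤ 1) : ∫ ω in Icc 0 1, |x' (fex19 k ω)| ≤ (√k)⁻¹ := by
  set a : ℕ → ℝ := fun i => x' (e1 i)
  have ha : ∀ i, |a i| ≤ 1 := fun i => by
    simpa [norm_e1] using (x'.le_opNorm (e1 i)).trans (by rw [norm_e1, mul_one]; exact hx')
  set F : ℝ → ℝ := fun ω => ∑ i ∈ Finset.Icc 1 k, a i * rademacher i ω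
  have hF : MemLp F 2 ((volume : Measure ℝ).restrict (Icc 0 1)) :=
    MemLp.of_bound (by fun_prop) k (ae_of_all _ fun ω => by
      calc ‖F ω‖ ≤ ∑ i ∈ Finset.Icc 1 k, |a i * rademacher i ω| := abs_sum_le_sum_abs _ _
        _ ≤ ∑ i ∈ Finset.Icc 1 k, (1 : ℝ) := sum_le_sum fun i _ => by
          rw [abs_mul]; exact mul_le_one₀ (ha i) (abs_nonneg _) (abs_rademacher_le_one i ω)
        _ = k := by simp)
  have hF2 : ∫ ω in Icc 0 1, F ω ^ 2 ≤ k :=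
    calc ∫ ω in Icc 0 1, F ω ^ 2 = ∑ i ∈ Finset.Icc 1 k, a i ^ 2 :=
          integral_sum_mul_sq_of_orthonormal _ (fun i _ j _ => integrableOn_rademacher_mul i j)
            (fun i _ j _ => integral_rademacher_mul i j) a
      _ ≤ ∑ i ∈ Finset.Icc 1 k, (1 : ℝ) := sum_le_sum fun i _ => by
          simpa [sq_abs] using pow_le_one₀ (abs_nonneg (a i)) (ha i) (n := 2)
      _ = k := by simp
  have hF1 : ∫ ω in Icc 0 1, |F ω| ≤ √k :=
    Real.le_sqrt_of_sq_le ((sq_integral_abs_le_integral_sq hF).trans hF2)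
  calc ∫ ω in Icc 0 1, |x' (fex19 k ω)| = (k : ℝ)⁻¹ * ∫ ω in Icc 0 1, |F ω| := by
        simp_rw [apply_fex19, abs_mul, abs_inv, Nat.abs_cast, integral_const_mul, F, a]
    _ ≤ (k : ℝ)⁻¹ * √k := by gcongr
    _ = (√k)⁻¹ := by rw [inv_mul_eq_div, Real.sqrt_div_self', one_div]

lemma pettisNorm_fex19_le (k : ℕ) :
    pettisNorm ((volume : Measure ℝ).restrict (Icc 0 1)) (fex19 k) ≤ (√k)⁻¹ :=
  haveI : Nonempty {x' : StrongDual ℝ (lp (fun _ : ℕ => ℝ) 1) // ‖x'‖ ≤ 1} := ⟨⟨0, by simp⟩⟩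
  ciSup_le fun x' => integral_abs_apply_fex19_le k x'.2

lemma pettisNorm_nonneg_s19 {Ω E : Type*} [MeasurableSpace Ω] [NormedAddCommGroup E]
    [NormedSpace ℝ E] (μ : Measure Ω) (f : Ω → E) : 0 ≤ pettisNorm μ f :=
  Real.iSup_nonneg fun _ => integral_nonneg fun _ => abs_nonneg _

lemma tendsto_pettisNorm_fex19 :
    Tendsto (fun k => pettisNorm ((volume : Measure ℝ).restrict (Icc 0 1)) (fex19 k))
      atTop (𝓝 0) :=
  tendsto_of_tendsto_of_tendsto_of_le_of_le tendsto_const_nhds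
    (tendsto_inv_atTop_zero.comp (Real.tendsto_sqrt_atTop.comp tendsto_natCast_atTop_atTop))
    (fun _ => pettisNorm_nonneg_s19 _ _) pettisNorm_fex19_le

lemma rademacher_mul_ite_eq (i : ℕ) (ω : ℝ) :
    rademacher i ω * (if rademacher i ω = 1 then 1 else 0)
      = (rademacher i ω * rademacher i ω + rademacher i ω) / 2 := by
  rcases rademacher_apply_eq i ω with h | h | h <;> norm_num [h]

lemma integral_rademacher_mul_ite {i : ℕ} (hi : 0 < i) :
    ∫ ω in Icc 0 1, rademacher i ω * (if rademacher i ω = 1 then 1 else 0) = 1 / 2 := by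
  simp_rw [rademacher_mul_ite_eq]
  rw [integral_div, integral_add (integrableOn_rademacher_mul i i) (integrableOn_rademacher i),
    integral_rademacher_mul_self, integral_rademacher hi, add_zero]

lemma integral_average_rademacher_mul_ite {k : ℕ} (hk : 1 ≤ k) :
    ∫ ω in Icc 0 1, (k : ℝ)⁻¹ * ∑ i ∈ Finset.Icc 1 k,
      rademacher i ω * (if rademacher i ω = 1 then 1 else 0) = 1 / 2 := by
  rw [integral_const_mul, integral_finsetSum _ fun i _ => by
      simp_rw [rademacher_mul_ite_eq]
      exact ((integrableOn_rademacher_mul i i).add (integrableOn_rademacher i)).div_const 2,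
    Finset.sum_congr rfl fun i hi => integral_rademacher_mul_ite (Finset.mem_Icc.1 hi).1]
  rw [sum_const, Nat.card_Icc, add_tsub_cancel_right, nsmul_eq_mul]
  field_simp

theorem pettis_not_weak :
    Filter.Tendsto
      (fun k => pettisNorm ((volume : Measure ℝ).restrict (Set.Icc 0 1)) (fex19 k))
      Filter.atTop (nhds 0) ∧
    -- pairing with `b(ω) = (1_{[r_i = 1]}(ω))_i ∈ L^∞(μ, ℓ^∞)` is identically one half,
    -- so `(f_k)` does not converge weakly (nor limitedly) to the null function
    (∀ k : ℕ, 1 ≤ k →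
      (∫ ω in Set.Icc (0 : ℝ) 1,
        (k : ℝ)⁻¹ * ∑ i ∈ Finset.Icc (1 : ℕ) k,
          rademacher i ω * (if rademacher i ω = 1 then (1 : ℝ) else 0)) = 1 / 2) ∧
    ¬ Filter.Tendsto
      (fun k : ℕ => ∫ ω in Set.Icc (0 : ℝ) 1,
        (k : ℝ)⁻¹ * ∑ i ∈ Finset.Icc (1 : ℕ) k,
          rademacher i ω * (if rademacher i ω = 1 then (1 : ℝ) else 0))
      Filter.atTop (nhds 0) := by
  refine ⟨tendsto_pettisNorm_fex19, fun k hk => integral_average_rademacher_mul_ite hk,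
    fun h => ?_⟩
  have hhalf : Tendsto (fun _ : ℕ => (1 / 2 : ℝ)) atTop (𝓝 0) :=
    h.congr' (eventually_atTop.2 ⟨1, fun k hk => integral_average_rademacher_mul_ite hk⟩)
  norm_num at hhalf
end
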